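/- arXiv:2503.09571 — 10 statements merged into one kernel-verified Lean document; each statement's English description precedes it below -/
import Mathlib

section
/- Fix integers n ≥ 1, m ≥ 2 and r ≥ 0, and a signed matroid (P,σ) of rank two on {1,…,n} with m parts. The kinematic stratum M⁰_{P,σ,r} is nonempty if and only if either (3 ≤ r and r ≤ m) or (r = 2 and m = 2). -/
/-!
At most one positive eigenvalue means that `S ≤ u uᵀ` in the Loewner order for some vector `u`.
A vector supported on a single part and orthogonal to `u` is then isotropic for the positive
semidefinite matrix `u uᵀ - S`, hence lies in the kernel of `S`; so `S` has rank at most `m`.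
Principal `2 × 2` and `3 × 3` submatrices on indices from distinct parts are nonsingular, which
gives `r ≥ 2`, and `r ≥ 3` when `m ≥ 3`.

Conversely, if `c₁, …, c_m` are distinct unit vectors of `ℝ^d` whose lifts `(1, c_μ)` span
`ℝ^{1+d}`, the Minkowski Gram matrix of the null vectors `σ_i (1, c_{part i})` (and `0` for loops)
lies in the stratum with `r = d + 1`. Such families exist for `d = 1`, `m = 2` (namely `±1`), and,
the unit sphere being infinite, for all `2 ≤ d < m`.
-/

open Matrix

/-- The kinematic stratum `M⁰_{P,σ,r}`: real symmetric `n × n` matrices `S` with zero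
diagonal, at most one positive eigenvalue, rank `r`, and off-diagonal sign pattern
governed by the signed matroid `(P, σ)` (encoded by `part : Fin n → Option (Fin m)`). -/
def kinematicStratum (n m : ℕ) (part : Fin n → Option (Fin m)) (σ : Fin n → ℝ) (r : ℕ) :
    Set (Matrix (Fin n) (Fin n) ℝ) :=
  {S | ∃ hS : S.IsHermitian,
    (∀ i, S i i = 0) ∧
    Nat.card {i : Fin n // 0 < hS.eigenvalues i} ≤ 1 ∧
    S.rank = r ∧
    ∀ i j : Fin n, i ≠ j →
      ((part i ≠ none ∧ part j ≠ none ∧ part i ≠ part j) → 0 < S i j * σ i * σ j) ∧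
      (¬(part i ≠ none ∧ part j ≠ none ∧ part i ≠ part j) → S i j = 0)}

namespace Matrix

lemma dotProduct_lt_one_of_ne {ι : Type*} [Fintype ι] {x y : ι → ℝ} (hx : x ⬝ᵥ x = 1)
    (hy : y ⬝ᵥ y = 1) (hxy : x ≠ y) : x ⬝ᵥ y < 1 := by
  have hpos : 0 < (x - y) ⬝ᵥ (x - y) := (dotProduct_self_star_nonneg (x - y)).lt_of_ne'
    (by rwa [Ne, star_trivial, dotProduct_self_eq_zero, sub_eq_zero])
  simp only [dotProduct_sub, sub_dotProduct, hx, hy, dotProduct_comm y x] at hpos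
  linarith

lemma rank_le_rank_of_mulVec_eq_zero {K m m' n : Type*} [Field K] [Fintype n]
    {A : Matrix m n K} {B : Matrix m' n K} (h : ∀ x, A *ᵥ x = 0 → B *ᵥ x = 0) :
    B.rank ≤ A.rank := by
  have hker : LinearMap.ker A.mulVecLin ≤ LinearMap.ker B.mulVecLin := fun x hx => h x hx
  have hA := LinearMap.finrank_range_add_finrank_ker A.mulVecLin
  have hB := LinearMap.finrank_range_add_finrank_ker B.mulVecLin
  have := Submodule.finrank_mono hker
  rw [rank, rank]
  omega

lemma card_le_rank_of_det_submatrix_ne_zero {K m n k : Type*} [Field K] [Fintype n] [Fintype k]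
    [DecidableEq k] (A : Matrix m n K) (r : k → m) (c : k → n) (h : (A.submatrix r c).det ≠ 0) :
    Fintype.card k ≤ A.rank :=
  (rank_of_det_ne_zero h).symm.le.trans (rank_submatrix_le A r c)

lemma rank_transpose_mul_mul_eq_of_mul_eq_one {R k n : Type*} [CommRing R] [StrongRankCondition R]
    [Fintype k] [DecidableEq k] [Fintype n] {W : Matrix k n R} {V : Matrix n k R} (hWV : W * V = 1)
    (η : Matrix k k R) : (Wᵀ * η * W).rank = η.rank := by
  refine le_antisymm ((rank_mul_le_left _ _).trans (rank_mul_le_right _ _)) ?_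
  calc η.rank = ((W * V)ᵀ * η * (W * V)).rank := by simp [hWV]
    _ = (Vᵀ * (Wᵀ * η * W) * V).rank := by simp only [transpose_mul, Matrix.mul_assoc]
    _ ≤ (Wᵀ * η * W).rank := (rank_mul_le_left _ _).trans (rank_mul_le_right _ _)

variable {ι : Type*} [Fintype ι] {S : Matrix ι ι ℝ}

lemma mulVec_eq_zero_of_le_sq (hS : S.IsHermitian) {u x : ι → ℝ}
    (hu : ∀ y, y ⬝ᵥ S *ᵥ y ≤ (u ⬝ᵥ y) ^ 2) (hx : x ⬝ᵥ S *ᵥ x = 0) (hux : u ⬝ᵥ x = 0) :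
    S *ᵥ x = 0 := by
  have huu : ∀ y, vecMulVec u u *ᵥ y = (u ⬝ᵥ y) • u := fun y => by
    simp [vecMulVec_mulVec]
  have hQ : (vecMulVec u u - S).PosSemidef := by
    have hU : (vecMulVec u u).IsHermitian := by
      simpa using (posSemidef_vecMulVec_self_star u).isHermitian
    refine .of_dotProduct_mulVec_nonneg (hU.sub hS) fun y => ?_
    have := hu y
    simp only [star_trivial, sub_mulVec, dotProduct_sub, huu, dotProduct_smul, smul_eq_mul,
      dotProduct_comm y u]
    nlinarith
  have hQx := (hQ.dotProduct_mulVec_zero_iff x).mp (by simp [sub_mulVec, huu, hux, hx])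
  simpa [sub_mulVec, huu, hux, sub_eq_zero] using hQx.symm

lemma rank_le_card_of_le_sq {κ : Type*} [Fintype κ] (hS : S.IsHermitian)
    {u : ι → ℝ} (hu : ∀ y, y ⬝ᵥ S *ᵥ y ≤ (u ⬝ᵥ y) ^ 2) (part : ι → Option κ)
    (hzero : ∀ i j, part j = none ∨ part i = part j → S i j = 0) :
    S.rank ≤ Fintype.card κ := by
  classical
  let L : Matrix κ ι ℝ := of fun μ i => if part i = some μ then u i else 0
  refine (rank_le_rank_of_mulVec_eq_zero (A := L) fun x hx => ?_).trans L.rank_le_card_height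
  let restrict : Option κ → ι → ℝ := fun o i => if part i = o then x i else 0
  have hx_eq : x = ∑ o, restrict o := by
    ext i
    simp [restrict, Finset.sum_apply]
  rw [hx_eq, mulVec_sum]
  refine Finset.sum_eq_zero fun o _ => ?_
  cases o with
  | none =>
    ext i
    refine Finset.sum_eq_zero fun j _ => ?_
    by_cases hj : part j = none
    · simp [hzero i j (.inl hj)]
    · simp [restrict, hj]
  | some μ =>
    -- `restrict (some μ) x` lives on a block where `S` vanishes and is orthogonal to `u`
    refine mulVec_eq_zero_of_le_sq hS hu ?_ ?_
    · refine Finset.sum_eq_zero fun i _ => ?_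
      simp only [mulVec, dotProduct, Finset.mul_sum]
      refine Finset.sum_eq_zero fun j _ => ?_
      by_cases hij : part i = some μ ∧ part j = some μ
      · simp [hzero i j (.inr (hij.1.trans hij.2.symm))]
      · rcases not_and_or.mp hij with h | h <;> simp [restrict, h]
    · simpa [L, restrict, mulVec, dotProduct, mul_ite, ite_mul] using congrFun hx μ

end Matrix

namespace Matrix.IsHermitian

variable {ι : Type*} [Fintype ι] [DecidableEq ι] {S : Matrix ι ι ℝ}

lemma eigenvectorBasis_dotProduct (hS : S.IsHermitian) (i j : ι) :
    ⇑(hS.eigenvectorBasis i) ⬝ᵥ ⇑(hS.eigenvectorBasis j) = if i = j then 1 else 0 := by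
  simpa [EuclideanSpace.inner_eq_star_dotProduct, dotProduct_comm]
    using orthonormal_iff_ite.mp hS.eigenvectorBasis.orthonormal i j

lemma dotProduct_mulVec_eq_sum_eigenvalues (hS : S.IsHermitian) (x : ι → ℝ) :
    x ⬝ᵥ S *ᵥ x = ∑ k, hS.eigenvalues k * (⇑(hS.eigenvectorBasis k) ⬝ᵥ x) ^ 2 := by
  set U : Matrix ι ι ℝ := (hS.eigenvectorUnitary : Matrix ι ι ℝ)
  have hUx : star U *ᵥ x = fun k => ⇑(hS.eigenvectorBasis k) ⬝ᵥ x := by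
    ext k
    simp [U, mulVec, dotProduct]
  conv_lhs => rw [hS.spectral_theorem, Unitary.conjStarAlgAut_apply]
  rw [← mulVec_mulVec, ← mulVec_mulVec, dotProduct_mulVec, ← mulVec_transpose,
    ← conjTranspose_eq_transpose_of_trivial, ← star_eq_conjTranspose, hUx]
  simp [dotProduct, mulVec_diagonal, sq, mul_left_comm]

lemma card_pos_eigenvalues_le_one_of_le_sq (hS : S.IsHermitian) (u : ι → ℝ)
    (hu : ∀ x, x ⬝ᵥ S *ᵥ x ≤ (u ⬝ᵥ x) ^ 2) :
    Nat.card {i // 0 < hS.eigenvalues i} ≤ 1 := by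
  rw [Finite.card_le_one_iff_subsingleton]
  refine ⟨fun ⟨a, ha⟩ ⟨b, hb⟩ => Subtype.ext ?_⟩
  by_contra hab
  change a ≠ b at hab
  set va : ι → ℝ := ⇑(hS.eigenvectorBasis a)
  set vb : ι → ℝ := ⇑(hS.eigenvectorBasis b)
  have hq : ∀ α β : ℝ, (α • va + β • vb) ⬝ᵥ S *ᵥ (α • va + β • vb) =
      α ^ 2 * hS.eigenvalues a + β ^ 2 * hS.eigenvalues b := by
    intro α β
    have := hS.eigenvectorBasis_dotProduct
    simp only [mulVec_add, mulVec_smul, hS.mulVec_eigenvectorBasis, dotProduct_add,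
      add_dotProduct, dotProduct_smul, smul_dotProduct, smul_eq_mul, va, vb, this, if_true,
      if_neg hab, if_neg (Ne.symm hab)]
    ring
  -- a nonzero vector of `span {va, vb}` orthogonal to `u`, where the form is positive definite
  by_cases hua : u ⬝ᵥ va = 0
  · have h := hu ((1 : ℝ) • va + (0 : ℝ) • vb)
    rw [hq, dotProduct_add, dotProduct_smul, dotProduct_smul, hua] at h
    norm_num at h
    linarith
  · have h := hu ((u ⬝ᵥ vb) • va + (-(u ⬝ᵥ va)) • vb)
    rw [hq, dotProduct_add, dotProduct_smul, dotProduct_smul, smul_eq_mul, smul_eq_mul] at h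
    have : 0 < (u ⬝ᵥ va) ^ 2 := by positivity
    nlinarith [sq_nonneg (u ⬝ᵥ vb), mul_pos this hb]

lemma exists_le_sq_of_card_pos_eigenvalues_le_one (hS : S.IsHermitian)
    (h : Nat.card {i // 0 < hS.eigenvalues i} ≤ 1) :
    ∃ u : ι → ℝ, ∀ x, x ⬝ᵥ S *ᵥ x ≤ (u ⬝ᵥ x) ^ 2 := by
  have hnonpos : ∀ p q, 0 < hS.eigenvalues p → q ≠ p → hS.eigenvalues q ≤ 0 := by
    intro p q hp hqp
    by_contra! hq
    have := Finite.card_le_one_iff_subsingleton.mp h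
    exact hqp (congrArg Subtype.val (Subsingleton.elim (⟨q, hq⟩ : {i // 0 < hS.eigenvalues i})
      ⟨p, hp⟩))
  by_cases hpos : ∃ p, 0 < hS.eigenvalues p
  · obtain ⟨p, hp⟩ := hpos
    refine ⟨√(hS.eigenvalues p) • ⇑(hS.eigenvectorBasis p), fun x => ?_⟩
    rw [hS.dotProduct_mulVec_eq_sum_eigenvalues, smul_dotProduct, smul_eq_mul, mul_pow,
      Real.sq_sqrt hp.le, ← Finset.add_sum_erase _ _ (Finset.mem_univ p), add_le_iff_nonpos_right]
    exact Finset.sum_nonpos fun k hk => mul_nonpos_of_nonpos_of_nonneg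
      (hnonpos p k hp (Finset.ne_of_mem_erase hk)) (sq_nonneg _)
  · push Not at hpos
    refine ⟨0, fun x => ?_⟩
    rw [hS.dotProduct_mulVec_eq_sum_eigenvalues, zero_dotProduct, sq, mul_zero]
    exact Finset.sum_nonpos fun k _ => mul_nonpos_of_nonpos_of_nonneg (hpos k) (sq_nonneg _)

lemma card_pos_eigenvalues_le_one_iff (hS : S.IsHermitian) :
    Nat.card {i // 0 < hS.eigenvalues i} ≤ 1 ↔ ∃ u : ι → ℝ, ∀ x, x ⬝ᵥ S *ᵥ x ≤ (u ⬝ᵥ x) ^ 2 :=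
  ⟨hS.exists_le_sq_of_card_pos_eigenvalues_le_one,
    fun ⟨u, hu⟩ => hS.card_pos_eigenvalues_le_one_of_le_sq u hu⟩

end Matrix.IsHermitian

namespace kinematicStratum

variable {n m r : ℕ} {part : Fin n → Option (Fin m)} {σ : Fin n → ℝ}
  {S : Matrix (Fin n) (Fin n) ℝ}

lemma apply_ne_zero (hS : S ∈ kinematicStratum n m part σ r) {i j : Fin n} {μ ν : Fin m}
    (hi : part i = some μ) (hj : part j = some ν) (hμν : μ ≠ ν) : S i j ≠ 0 := by
  obtain ⟨-, -, -, -, hsign⟩ := hS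
  have hij : i ≠ j := by
    rintro rfl
    exact hμν (Option.some_injective _ (hi.symm.trans hj))
  have hpos := (hsign i j hij).1 ⟨by simp [hi], by simp [hj], by simp [hi, hj, hμν]⟩
  exact fun h0 => by simp [h0] at hpos

lemma apply_eq_zero (hS : S ∈ kinematicStratum n m part σ r) {i j : Fin n}
    (h : part j = none ∨ part i = part j) : S i j = 0 := by
  obtain ⟨-, hdiag, -, -, hsign⟩ := hS
  rcases eq_or_ne i j with rfl | hij
  · exact hdiag i
  · exact (hsign i j hij).2 fun ⟨_, hj, hne⟩ => h.elim hj hne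

lemma rank_le (hS : S ∈ kinematicStratum n m part σ r) : r ≤ m := by
  obtain ⟨hH, -, hcard, hrank, -⟩ := id hS
  obtain ⟨u, hu⟩ := hH.card_pos_eigenvalues_le_one_iff.mp hcard
  simpa [hrank] using rank_le_card_of_le_sq hH hu part fun i j => apply_eq_zero hS

lemma two_le_rank (hS : S ∈ kinematicStratum n m part σ r)
    (hpart : ∀ μ : Fin m, ∃ i, part i = some μ) (hm : 2 ≤ m) : 2 ≤ r := by
  obtain ⟨i₀, hi₀⟩ := hpart ⟨0, by omega⟩
  obtain ⟨i₁, hi₁⟩ := hpart ⟨1, by omega⟩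
  have h₀₁ : (⟨0, by omega⟩ : Fin m) ≠ ⟨1, by omega⟩ := by simp
  have hdet : (S.submatrix ![i₀, i₁] ![i₀, i₁]).det ≠ 0 := by
    rw [det_fin_two]
    simpa [apply_eq_zero hS (.inr rfl)] using
      mul_ne_zero (apply_ne_zero hS hi₀ hi₁ h₀₁) (apply_ne_zero hS hi₁ hi₀ h₀₁.symm)
  simpa [hS.2.2.2.1] using card_le_rank_of_det_submatrix_ne_zero S _ _ hdet

lemma three_le_rank (hS : S ∈ kinematicStratum n m part σ r)
    (hpart : ∀ μ : Fin m, ∃ i, part i = some μ) (hm : 3 ≤ m) : 3 ≤ r := by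
  obtain ⟨i₀, hi₀⟩ := hpart ⟨0, by omega⟩
  obtain ⟨i₁, hi₁⟩ := hpart ⟨1, by omega⟩
  obtain ⟨i₂, hi₂⟩ := hpart ⟨2, by omega⟩
  have hsymm : ∀ i j, S j i = S i j := fun i j => by simpa using hS.1.apply i j
  -- a symmetric zero-diagonal `3 × 3` matrix has determinant `2 s₀₁ s₀₂ s₁₂`
  have hdet : (S.submatrix ![i₀, i₁, i₂] ![i₀, i₁, i₂]).det ≠ 0 := by
    have h := mul_ne_zero (mul_ne_zero (apply_ne_zero hS hi₀ hi₁ (by simp))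
      (apply_ne_zero hS hi₀ hi₂ (by simp))) (apply_ne_zero hS hi₁ hi₂ (by simp))
    rw [det_fin_three]
    simp only [submatrix_apply, cons_val_zero, cons_val_one, cons_val_two, tail_cons, head_cons,
      apply_eq_zero hS (.inr rfl), hsymm i₀ i₁, hsymm i₀ i₂, hsymm i₁ i₂]
    intro h0
    exact h (by linear_combination h0 / 2)
  simpa [hS.2.2.2.1] using card_le_rank_of_det_submatrix_ne_zero S _ _ hdet

end kinematicStratum

def minkowskiMetric (d : ℕ) : Matrix (Fin (d + 1)) (Fin (d + 1)) ℝ := diagonal (Fin.cons 1 (-1))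

namespace minkowskiMetric

variable {d : ℕ}

lemma dotProduct_mulVec (x y : Fin (d + 1) → ℝ) :
    x ⬝ᵥ minkowskiMetric d *ᵥ y = x 0 * y 0 - Fin.tail x ⬝ᵥ Fin.tail y := by
  simp [minkowskiMetric, mulVec_diagonal, dotProduct, Fin.sum_univ_succ, Fin.tail, sub_eq_add_neg]

lemma rank_eq : (minkowskiMetric d).rank = d + 1 := by
  have hdet : (minkowskiMetric d).det ≠ 0 := by
    simp [minkowskiMetric, det_diagonal, Fin.prod_univ_succ]
  simpa using rank_of_det_ne_zero hdet

variable {ι : Type*} (W : Matrix (Fin (d + 1)) ι ℝ)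

lemma isHermitian_transpose_mul_mul : (Wᵀ * minkowskiMetric d * W).IsHermitian := by
  simp [IsHermitian, conjTranspose_eq_transpose_of_trivial, transpose_mul, minkowskiMetric,
    Matrix.mul_assoc]

lemma transpose_mul_mul_apply (i j : ι) :
    (Wᵀ * minkowskiMetric d * W) i j = W.col i ⬝ᵥ minkowskiMetric d *ᵥ W.col j := by
  rw [minkowskiMetric, mul_apply]
  simp only [mul_diagonal, transpose_apply, mulVec_diagonal, dotProduct, col_apply]
  exact Finset.sum_congr rfl fun _ _ => by ring

lemma dotProduct_transpose_mul_mul_mulVec_le [Fintype ι] (x : ι → ℝ) :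
    x ⬝ᵥ (Wᵀ * minkowskiMetric d * W) *ᵥ x ≤ (W 0 ⬝ᵥ x) ^ 2 := by
  rw [← mulVec_mulVec, ← mulVec_mulVec, Matrix.dotProduct_mulVec, vecMul_transpose,
    dotProduct_mulVec, sq]
  have := dotProduct_self_star_nonneg (Fin.tail (W *ᵥ x))
  simp only [star_trivial] at this
  exact sub_le_self _ this

lemma rank_transpose_mul_mul [Fintype ι] (hW : Submodule.span ℝ (Set.range W.col) = ⊤) :
    (Wᵀ * minkowskiMetric d * W).rank = d + 1 := by
  have hsurj : Function.Surjective W.mulVec :=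
    (LinearMap.range_eq_top (f := W.mulVecLin)).mp (by rw [range_mulVecLin, hW])
  obtain ⟨V, hWV⟩ := mulVec_surjective_iff_exists_right_inverse.mp hsurj
  rw [rank_transpose_mul_mul_eq_of_mul_eq_one hWV, rank_eq]

end minkowskiMetric

open minkowskiMetric in
lemma kinematicStratum_nonempty_of_unit_vectors {n m d : ℕ} (part : Fin n → Option (Fin m))
    (hpart : ∀ μ, ∃ i, part i = some μ) (σ : Fin n → ℝ) (hσ : ∀ i, σ i = 1 ∨ σ i = -1)
    {c : Fin m → Fin d → ℝ} (hc : Function.Injective c) (hunit : ∀ μ, c μ ⬝ᵥ c μ = 1)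
    (hspan : Submodule.span ℝ (Set.range fun μ => (Fin.cons 1 (c μ) : Fin (d + 1) → ℝ)) = ⊤) :
    (kinematicStratum n m part σ (d + 1)).Nonempty := by
  have hσσ : ∀ i, σ i * σ i = 1 := fun i => by rcases hσ i with h | h <;> simp [h]
  let lift : Option (Fin m) → Fin (d + 1) → ℝ := fun o => o.elim 0 fun μ => Fin.cons 1 (c μ)
  let W : Matrix (Fin (d + 1)) (Fin n) ℝ := of fun k i => σ i * lift (part i) k
  have hcol : ∀ i, W.col i = σ i • lift (part i) := fun i => rfl
  have hlift : ∀ μ ν, lift (some μ) ⬝ᵥ minkowskiMetric d *ᵥ lift (some ν) = 1 - c μ ⬝ᵥ c ν := by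
    simp [lift, minkowskiMetric.dotProduct_mulVec]
  have hentry : ∀ i j, (Wᵀ * minkowskiMetric d * W) i j =
      σ i * σ j * (lift (part i) ⬝ᵥ minkowskiMetric d *ᵥ lift (part j)) := by
    intro i j
    rw [transpose_mul_mul_apply, hcol, hcol, mulVec_smul, dotProduct_smul, smul_dotProduct,
      smul_eq_mul, smul_eq_mul]
    ring
  have hspanW : Submodule.span ℝ (Set.range W.col) = ⊤ := by
    rw [eq_top_iff, ← hspan, Submodule.span_le]
    rintro _ ⟨μ, rfl⟩
    obtain ⟨i, hi⟩ := hpart μ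
    have : (Fin.cons 1 (c μ) : Fin (d + 1) → ℝ) = σ i • W.col i := by
      rw [hcol, smul_smul, hσσ, one_smul, hi]
      rfl
    show (Fin.cons 1 (c μ) : Fin (d + 1) → ℝ) ∈ Submodule.span ℝ (Set.range W.col)
    rw [this]
    exact Submodule.smul_mem _ _ (Submodule.subset_span ⟨i, rfl⟩)
  refine ⟨Wᵀ * minkowskiMetric d * W, isHermitian_transpose_mul_mul W, fun i => ?_,
    (isHermitian_transpose_mul_mul W).card_pos_eigenvalues_le_one_iff.mpr
      ⟨W 0, dotProduct_transpose_mul_mul_mulVec_le W⟩,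
    rank_transpose_mul_mul W hspanW, fun i j _ => ⟨?_, fun hnot => ?_⟩⟩
  · rw [hentry]
    rcases part i with _ | μ
    · simp [lift]
    · simp [hlift, hunit]
  · rintro ⟨hi, hj, hne⟩
    obtain ⟨μ, hμ⟩ := Option.ne_none_iff_exists'.mp hi
    obtain ⟨ν, hν⟩ := Option.ne_none_iff_exists'.mp hj
    have hlt := dotProduct_lt_one_of_ne (hunit μ) (hunit ν)
      (hc.ne fun h => hne (by rw [hμ, hν, h]))
    rw [hentry, hμ, hν, hlift]
    calc (0 : ℝ) < 1 - c μ ⬝ᵥ c ν := sub_pos.mpr hlt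
      _ = _ := by
        linear_combination (c μ ⬝ᵥ c ν - 1) * (σ j * σ j * hσσ i + hσσ j)
  · rw [hentry]
    rcases hpi : part i with _ | μ
    · simp [lift]
    rcases hpj : part j with _ | ν
    · simp [lift]
    obtain rfl : μ = ν := by
      by_contra h
      exact hnot ⟨by simp [hpi], by simp [hpj], by simp [hpi, hpj, h]⟩
    simp [hlift, hunit]

def basisWithNeg (d : ℕ) [NeZero d] : Fin (d + 1) → Fin d → ℝ :=
  Fin.cons (-Pi.single 0 1) fun j => Pi.single j 1

namespace basisWithNeg

variable {d : ℕ} [NeZero d]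

@[simp] lemma apply_zero : basisWithNeg d 0 = -Pi.single 0 1 := rfl

@[simp] lemma apply_succ (j : Fin d) : basisWithNeg d j.succ = Pi.single j 1 := rfl

lemma injective : Function.Injective (basisWithNeg d) := by
  intro μ ν h
  induction μ using Fin.cases <;> induction ν using Fin.cases <;>
    simp only [apply_zero, apply_succ] at h
  case zero.zero => rfl
  case zero.succ j | succ.zero j =>
    have h₀ := congrFun h 0
    simp only [Pi.neg_apply, Pi.single_apply] at h₀
    split_ifs at h₀ <;> norm_num at h₀
  case succ.succ i j => simpa [Pi.single_apply] using congrFun h i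

lemma dotProduct_self (μ : Fin (d + 1)) : basisWithNeg d μ ⬝ᵥ basisWithNeg d μ = 1 := by
  induction μ using Fin.cases <;> simp

lemma span_cons : Submodule.span ℝ
    (Set.range fun μ => (Fin.cons 1 (basisWithNeg d μ) : Fin (d + 1) → ℝ)) = ⊤ := by
  set V := Submodule.span ℝ (Set.range fun μ => (Fin.cons 1 (basisWithNeg d μ) : Fin (d + 1) → ℝ))
  have hmem : ∀ μ, (Fin.cons 1 (basisWithNeg d μ) : Fin (d + 1) → ℝ) ∈ V :=
    fun μ => Submodule.subset_span ⟨μ, rfl⟩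
  have h₀ : (Pi.single 0 1 : Fin (d + 1) → ℝ) ∈ V := by
    have : (Pi.single 0 1 : Fin (d + 1) → ℝ) = (1 / 2 : ℝ) •
        (Fin.cons 1 (basisWithNeg d 0) + Fin.cons 1 (basisWithNeg d (0 : Fin d).succ)) := by
      rw [apply_zero, apply_succ]
      ext k
      refine Fin.cases ?_ (fun j => ?_) k <;> simp [Pi.single_apply]
      norm_num
    rw [this]
    exact V.smul_mem _ (V.add_mem (hmem _) (hmem _))
  rw [eq_top_iff, ← (Pi.basisFun ℝ (Fin (d + 1))).span_eq, Submodule.span_le]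
  rintro _ ⟨k, rfl⟩
  induction k using Fin.cases with
  | zero => simpa using h₀
  | succ j =>
    have : (Pi.single j.succ 1 : Fin (d + 1) → ℝ) =
        Fin.cons 1 (basisWithNeg d j.succ) - Pi.single 0 1 := by
      rw [apply_succ]
      ext k
      refine Fin.cases ?_ (fun l => ?_) k <;> simp [Pi.single_apply]
    simpa [this] using V.sub_mem (hmem j.succ) h₀

end basisWithNeg

lemma infinite_setOf_dotProduct_self_eq_one {d : ℕ} (hd : 2 ≤ d) :
    {v : Fin d → ℝ | v ⬝ᵥ v = 1}.Infinite := by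
  let i₀ : Fin d := ⟨0, by omega⟩
  let i₁ : Fin d := ⟨1, by omega⟩
  have h₀₁ : i₀ ≠ i₁ := by simp [i₀, i₁]
  let f : ℝ → Fin d → ℝ := fun t => Pi.single i₀ t + Pi.single i₁ √(1 - t ^ 2)
  refine Set.infinite_of_injOn_mapsTo (f := f) (fun s _ t _ h => ?_) (fun t ht => ?_)
    (Set.Icc_infinite (by norm_num : (-1 : ℝ) < 1))
  · simpa [f, h₀₁] using congrFun h i₀
  · have : 0 ≤ 1 - t ^ 2 := by nlinarith [ht.1, ht.2]
    simp [f, dotProduct_add, h₀₁, h₀₁.symm, ← sq, Real.sq_sqrt this]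

lemma exists_injective_unit_vectors {d m : ℕ} (hd : 2 ≤ d) (hdm : d < m) :
    ∃ c : Fin m → Fin d → ℝ, Function.Injective c ∧ (∀ μ, c μ ⬝ᵥ c μ = 1) ∧
      Submodule.span ℝ (Set.range fun μ => (Fin.cons 1 (c μ) : Fin (d + 1) → ℝ)) = ⊤ := by
  have : NeZero d := ⟨by omega⟩
  obtain ⟨s, hbs, hs, hcard⟩ := (infinite_setOf_dotProduct_self_eq_one hd).exists_superset_ncard_eq
    (s := Set.range (basisWithNeg d)) (by rintro _ ⟨μ, rfl⟩; exact basisWithNeg.dotProduct_self μ)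
    (Set.finite_range _) (k := m)
    (by rw [Set.ncard_range_of_injective basisWithNeg.injective]; simpa using hdm)
  have : Finite s := (Set.finite_of_ncard_pos (by omega)).to_subtype
  let e := Finite.equivFinOfCardEq (by rwa [Nat.card_coe_set_eq] : Nat.card s = m)
  refine ⟨fun μ => e.symm μ, Subtype.val_injective.comp e.symm.injective,
    fun μ => hs (e.symm μ).2, ?_⟩
  rw [eq_top_iff, ← basisWithNeg.span_cons]
  refine Submodule.span_mono ?_
  rintro _ ⟨μ, rfl⟩
  obtain ⟨ν, hν⟩ : ∃ ν, (e.symm ν : Fin d → ℝ) = basisWithNeg d μ :=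
    ⟨e ⟨_, hbs ⟨μ, rfl⟩⟩, by simp⟩
  exact ⟨ν, by simp [hν]⟩

theorem kinematicStratum_nonempty_iff_general (n m r : ℕ) (hm : 2 ≤ m)
    (part : Fin n → Option (Fin m)) (hpart : ∀ μ : Fin m, ∃ i, part i = some μ)
    (σ : Fin n → ℝ) (hσ : ∀ i, σ i = 1 ∨ σ i = -1) :
    (kinematicStratum n m part σ r).Nonempty ↔ ((3 ≤ r ∧ r ≤ m) ∨ (r = 2 ∧ m = 2)) := by
  constructor
  · rintro ⟨S, hS⟩
    have h₂ := kinematicStratum.two_le_rank hS hpart hm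
    have hrm := kinematicStratum.rank_le hS
    by_cases h₃ : 3 ≤ m
    · exact .inl ⟨kinematicStratum.three_le_rank hS hpart h₃, hrm⟩
    · exact .inr ⟨by omega, by omega⟩
  · rintro (⟨h₃, hrm⟩ | ⟨rfl, rfl⟩)
    · obtain ⟨c, hc, hunit, hspan⟩ :=
        exists_injective_unit_vectors (d := r - 1) (m := m) (by omega) (by omega)
      have hr : r - 1 + 1 = r := by omega
      simpa [hr] using kinematicStratum_nonempty_of_unit_vectors part hpart σ hσ hc hunit hspan
    · exact kinematicStratum_nonempty_of_unit_vectors part hpart σ hσ basisWithNeg.injective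
        (basisWithNeg.dotProduct_self (d := 1)) basisWithNeg.span_cons

/-- Theorem (nonemptiness of kinematic strata): for a signed matroid `(P, σ)` of rank two
on `{1,…,n}` with `m ≥ 2` parts, the stratum `M⁰_{P,σ,r}` is nonempty if and only if
`3 ≤ r ≤ m` or `r = m = 2`. -/
theorem kinematicStratum_nonempty_iff (n m r : ℕ) (hn : 1 ≤ n) (hm : 2 ≤ m)
    (part : Fin n → Option (Fin m)) (hpart : ∀ μ : Fin m, ∃ i, part i = some μ)
    (σ : Fin n → ℝ) (hσ : ∀ i, σ i = 1 ∨ σ i = -1) :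
    (kinematicStratum n m part σ r).Nonempty ↔ ((3 ≤ r ∧ r ≤ m) ∨ (r = 2 ∧ m = 2)) :=
  kinematicStratum_nonempty_iff_general n m r hm part hpart σ hσ
end

section
/- Let S be a real symmetric n×n matrix. Then S has all diagonal entries nonnegative and at most one positive eigenvalue if and only if (−1)^{|I|−1}·det(S_I) ≥ 0 for every nonempty subset I ⊆ {1,…,n}, where S_I denotes the principal submatrix of S with rows and columns indexed by I. -/
/-!
A real symmetric matrix `S` has at most one positive eigenvalue iff `S ≤ u uᵀ` in the Loewner
order for some vector `u`. In an eigenbasis `S = diagonal d`; if at most one `dᵢ` is positive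
then `diagonal d ≤ z zᵀ` for `zᵢ = √(max dᵢ 0)`, while two positive entries `dᵢ, dⱼ` are ruled
out by the test vector `zⱼ eᵢ - zᵢ eⱼ`.
The inequality `S ≤ u uᵀ` passes to principal submatrices, so each `S_I` again has at most one
positive eigenvalue; as its diagonal, hence its trace, is nonnegative, `det S_I` (the product
of its eigenvalues) either vanishes or has sign `(-1)^(|I|-1)`.

Conversely, the coefficient of `t^(n-k)` in `det (t - S)` is `(-1)^k` times the sum of the
`k × k` principal minors, so the hypothesis makes every non-leading coefficient of the
characteristic polynomial nonpositive. It then has at most one sign variation, and Descartes'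
rule of signs leaves room for at most one positive root.
-/

open Matrix Polynomial

namespace Polynomial

variable {R : Type*}

theorem signVariations_eq_zero_of_coeff_nonneg [Semiring R] [LinearOrder R] (P : R[X])
    (h : ∀ k, 0 ≤ P.coeff k) : P.signVariations = 0 := by
  induction hn : P.support.card generalizing P with
  | zero => simp_all
  | succ m ih =>
    have hP : P ≠ 0 := by rintro rfl; simp at hn
    have hcoeff : ∀ k, 0 ≤ P.eraseLead.coeff k := fun k => by
      rw [eraseLead_coeff]; split_ifs <;> simp [h]
    have hlead : 0 < P.leadingCoeff := (h _).lt_of_ne' (leadingCoeff_ne_zero.mpr hP)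
    have hsign : SignType.sign P.leadingCoeff ≠ -SignType.sign P.eraseLead.leadingCoeff := by
      rw [sign_pos hlead]
      rcases (hcoeff P.eraseLead.natDegree).eq_or_lt with h0 | hpos
      · rw [leadingCoeff, ← h0, sign_zero]; decide
      · rw [leadingCoeff, sign_pos hpos]; decide
    rw [signVariations_eq_eraseLead_add_ite hP, ih _ hcoeff (card_support_eraseLead' hn),
      if_neg hsign]

theorem signVariations_le_one_of_coeff_nonpos [Ring R] [LinearOrder R] [IsOrderedRing R]
    (P : R[X]) (h : ∀ k < P.natDegree, P.coeff k ≤ 0) : P.signVariations ≤ 1 := by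
  have hneg : P.eraseLead.signVariations = 0 := by
    rw [← signVariations_neg]
    refine signVariations_eq_zero_of_coeff_nonneg _ fun k => ?_
    rw [coeff_neg, eraseLead_coeff, neg_nonneg]
    split_ifs with hk
    · rfl
    · rcases lt_or_gt_of_ne hk with hlt | hgt
      · exact h k hlt
      · rw [coeff_eq_zero_of_natDegree_lt hgt]
  simpa [hneg] using P.signVariations_le_eraseLead_succ

end Polynomial

theorem Nat.card_subtype_le_one_iff {α : Type*} [Finite α] {p : α → Prop} :
    Nat.card {a // p a} ≤ 1 ↔ ∀ a b, p a → p b → a = b := by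
  rw [Finite.card_le_one_iff_subsingleton]
  exact ⟨fun h a b ha hb => congrArg Subtype.val (h.elim ⟨a, ha⟩ ⟨b, hb⟩),
    fun h => ⟨fun a b => Subtype.ext (h _ _ a.2 b.2)⟩⟩

namespace Matrix

variable {ι : Type*}

/-- Since `√` vanishes on negative reals, the vector `(√dᵢ)ᵢ` has at most one nonzero entry. -/
theorem vecMulVec_sqrt_sub_diagonal [DecidableEq ι] {d : ι → ℝ}
    (hd : ∀ i j, 0 < d i → 0 < d j → i = j) :
    vecMulVec (fun i => √(d i)) (fun i => √(d i)) - diagonal d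
      = diagonal fun i => √(d i) ^ 2 - d i := by
  ext i j
  rcases eq_or_ne i j with rfl | hij
  · simp [vecMulVec_apply, sq]
  · have : √(d i) = 0 ∨ √(d j) = 0 := by
      simp only [Real.sqrt_eq_zero']
      by_contra! h
      exact hij (hd i j h.1 h.2)
    rcases this with h | h <;> simp [vecMulVec_apply, hij, h]

theorem mul_vecMulVec_sub_mul_transpose {R : Type*} [CommRing R] [Fintype ι]
    (U D : Matrix ι ι R) (z : ι → R) :
    U * (vecMulVec z z - D) * Uᵀ = vecMulVec (U *ᵥ z) (U *ᵥ z) - U * D * Uᵀ := by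
  rw [mul_sub, sub_mul, mul_vecMulVec, vecMulVec_mul, vecMul_transpose]

section

variable [Fintype ι] [DecidableEq ι]

theorem eq_of_posSemidef_vecMulVec_sub_diagonal {d z : ι → ℝ}
    (h : (vecMulVec z z - diagonal d).PosSemidef) (i j : ι) (hi : 0 < d i) (hj : 0 < d j) :
    i = j := by
  by_contra hij
  have hii : d i ≤ z i * z i := by simpa [vecMulVec_apply] using h.diag_nonneg (i := i)
  have hquad := h.dotProduct_mulVec_nonneg (Pi.single i (z j) - Pi.single j (z i))
  simp [sub_mulVec, vecMulVec_mulVec, mulVec_diagonal, hij, Ne.symm hij] at hquad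
  nlinarith [sq_nonneg (z j)]

theorem card_pos_le_one_iff_exists_posSemidef_vecMulVec_sub_diagonal (d : ι → ℝ) :
    Nat.card {i // 0 < d i} ≤ 1 ↔ ∃ z : ι → ℝ, (vecMulVec z z - diagonal d).PosSemidef := by
  rw [Nat.card_subtype_le_one_iff]
  refine ⟨fun hd => ⟨fun i => √(d i), ?_⟩,
    fun ⟨z, hz⟩ => eq_of_posSemidef_vecMulVec_sub_diagonal hz⟩
  rw [vecMulVec_sqrt_sub_diagonal hd, posSemidef_diagonal_iff]
  intro i
  rw [Real.sq_sqrt', sub_nonneg]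
  exact le_max_left _ _

theorem IsHermitian.card_pos_eigenvalues_le_one_iff_s6 {S : Matrix ι ι ℝ} (hS : S.IsHermitian) :
    Nat.card {i // 0 < hS.eigenvalues i} ≤ 1 ↔
      ∃ u : ι → ℝ, (vecMulVec u u - S).PosSemidef := by
  set U : Matrix ι ι ℝ := ↑hS.eigenvectorUnitary
  have hUU : U * Uᵀ = 1 := Unitary.coe_mul_star_self _
  have hspec : U * diagonal hS.eigenvalues * Uᵀ = S := by
    have := hS.spectral_theorem
    rw [Unitary.conjStarAlgAut_apply, star_eq_conjTranspose,
      conjTranspose_eq_transpose_of_trivial] at this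
    simpa using this.symm
  have hconj (z : ι → ℝ) :
      U * (vecMulVec z z - diagonal hS.eigenvalues) * Uᵀ = vecMulVec (U *ᵥ z) (U *ᵥ z) - S := by
    rw [mul_vecMulVec_sub_mul_transpose, hspec]
  have hpsd (z : ι → ℝ) : (vecMulVec (U *ᵥ z) (U *ᵥ z) - S).PosSemidef ↔
      (vecMulVec z z - diagonal hS.eigenvalues).PosSemidef := by
    rw [← hconj]
    exact Unitary.isUnit_coe.posSemidef_star_right_conjugate_iff
  rw [card_pos_le_one_iff_exists_posSemidef_vecMulVec_sub_diagonal]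
  refine ⟨fun ⟨z, hz⟩ => ⟨U *ᵥ z, (hpsd z).mpr hz⟩, fun ⟨u, hu⟩ => ⟨Uᵀ *ᵥ u, (hpsd _).mp ?_⟩⟩
  rwa [mulVec_mulVec, hUU, one_mulVec]

theorem IsHermitian.card_pos_eigenvalues_submatrix_le_one {S : Matrix ι ι ℝ}
    (hS : S.IsHermitian) (hcard : Nat.card {i // 0 < hS.eigenvalues i} ≤ 1)
    {κ : Type*} [Fintype κ] [DecidableEq κ] (e : κ → ι) :
    Nat.card {i // 0 < (hS.submatrix e).eigenvalues i} ≤ 1 := by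
  obtain ⟨u, hu⟩ := hS.card_pos_eigenvalues_le_one_iff_s6.mp hcard
  refine (hS.submatrix e).card_pos_eigenvalues_le_one_iff_s6.mpr ⟨u ∘ e, ?_⟩
  convert hu.submatrix e using 1
  ext i j
  simp [vecMulVec_apply]

theorem IsHermitian.eigenvalues_eq_zero_of_forall_nonpos {T : Matrix ι ι ℝ} (hT : T.IsHermitian)
    (hdiag : ∀ i, 0 ≤ T i i) (hnonpos : ∀ i, hT.eigenvalues i ≤ 0) (i : ι) :
    hT.eigenvalues i = 0 := by
  have htrace : T.trace = ∑ j, hT.eigenvalues j := by simpa using hT.trace_eq_sum_eigenvalues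
  have hsum : 0 ≤ ∑ j, hT.eigenvalues j := htrace ▸ Finset.sum_nonneg fun j _ => hdiag j
  exact (Finset.sum_eq_zero_iff_of_nonpos fun j _ => hnonpos j).mp
    (le_antisymm (Finset.sum_nonpos fun j _ => hnonpos j) hsum) i (Finset.mem_univ i)

theorem IsHermitian.sign_det_of_card_pos_eigenvalues_le_one [Nonempty ι] {T : Matrix ι ι ℝ}
    (hT : T.IsHermitian) (hdiag : ∀ i, 0 ≤ T i i)
    (hcard : Nat.card {i // 0 < hT.eigenvalues i} ≤ 1) :
    0 ≤ (-1 : ℝ) ^ (Fintype.card ι - 1) * T.det := by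
  rw [Nat.card_subtype_le_one_iff] at hcard
  have hdet : T.det = ∏ i, hT.eigenvalues i := by simpa using hT.det_eq_prod_eigenvalues
  rw [hdet]
  by_cases hpos : ∃ i₀, 0 < hT.eigenvalues i₀
  · obtain ⟨i₀, hi₀⟩ := hpos
    have hcard_erase : (Finset.univ.erase i₀).card = Fintype.card ι - 1 := by
      rw [Finset.card_erase_of_mem (Finset.mem_univ _), Finset.card_univ]
    rw [← Finset.mul_prod_erase _ _ (Finset.mem_univ i₀), mul_left_comm, ← hcard_erase,
      ← Finset.prod_neg]
    refine mul_nonneg hi₀.le (Finset.prod_nonneg fun j hj => neg_nonneg.mpr ?_)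
    exact not_lt.mp fun hj' => (Finset.ne_of_mem_erase hj) (hcard _ _ hj' hi₀)
  · simp only [not_exists, not_lt] at hpos
    rw [Finset.prod_eq_zero (Finset.mem_univ (Classical.arbitrary ι))
      (hT.eigenvalues_eq_zero_of_forall_nonpos hdiag hpos _), mul_zero]

theorem charpoly_coeff_nonpos_of_principal_minors {R : Type*} [CommRing R] [LinearOrder R]
    [IsStrictOrderedRing R] {S : Matrix ι ι R}
    (h : ∀ I : Finset ι, I.Nonempty →
      0 ≤ (-1 : R) ^ (I.card - 1) * (S.submatrix ((↑) : I → ι) (↑)).det)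
    {k : ℕ} (hk : k < Fintype.card ι) : S.charpoly.coeff k ≤ 0 := by
  obtain ⟨m, hm, hmι, rfl⟩ : ∃ m, 1 ≤ m ∧ m ≤ Fintype.card ι ∧ k = Fintype.card ι - m :=
    ⟨Fintype.card ι - k, by omega, by omega, by omega⟩
  rw [charpoly_coeff_eq_sum_minors S m hmι, Finset.mul_sum]
  refine Finset.sum_nonpos fun I hI => ?_
  obtain ⟨-, hcard⟩ := Finset.mem_powersetCard.mp hI
  have := h I (Finset.card_pos.mp (by omega))
  rw [hcard] at this
  rw [← Nat.sub_add_cancel hm, pow_succ]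
  linarith

theorem IsHermitian.card_pos_eigenvalues_eq_countP_roots {S : Matrix ι ι ℝ}
    (hS : S.IsHermitian) :
    Nat.card {i // 0 < hS.eigenvalues i} = S.charpoly.roots.countP (0 < ·) := by
  rw [hS.roots_charpoly_eq_eigenvalues, Multiset.countP_map, Nat.card_eq_fintype_card,
    Fintype.card_subtype]
  rfl

theorem IsHermitian.card_pos_eigenvalues_le_one_of_principal_minors {S : Matrix ι ι ℝ}
    (hS : S.IsHermitian)
    (h : ∀ I : Finset ι, I.Nonempty →
      0 ≤ (-1 : ℝ) ^ (I.card - 1) * (S.submatrix ((↑) : I → ι) (↑)).det) :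
    Nat.card {i // 0 < hS.eigenvalues i} ≤ 1 := by
  rw [hS.card_pos_eigenvalues_eq_countP_roots]
  refine (roots_countP_pos_le_signVariations _).trans
    (signVariations_le_one_of_coeff_nonpos _ fun k hk => ?_)
  rw [charpoly_natDegree_eq_dim] at hk
  exact charpoly_coeff_nonpos_of_principal_minors h hk

end

theorem det_submatrix_singleton {R : Type*} [CommRing R] [DecidableEq ι] (S : Matrix ι ι R)
    (i : ι) :
    (S.submatrix ((↑) : ({i} : Finset ι) → ι) (↑)).det = S i i := by
  rw [det_unique]
  rfl

end Matrix

/-- Lemma (characterization of Mandelstam matrices): a real symmetric `n × n` matrix `S`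
has all diagonal entries nonnegative and at most one positive eigenvalue if and only if
`(-1)^(|I|-1) · det(S_I) ≥ 0` for every nonempty subset `I ⊆ {1,…,n}`, where `S_I` is the
principal submatrix with rows and columns indexed by `I`. -/
theorem mandelstam_iff_principal_minors (n : ℕ) (S : Matrix (Fin n) (Fin n) ℝ)
    (hS : S.IsHermitian) :
    ((∀ i, 0 ≤ S i i) ∧ Nat.card {i : Fin n // 0 < hS.eigenvalues i} ≤ 1) ↔
      ∀ I : Finset (Fin n), I.Nonempty →
        0 ≤ (-1 : ℝ) ^ (I.card - 1) *
          (S.submatrix (fun i : I => (i : Fin n)) (fun j : I => (j : Fin n))).det := by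
  constructor
  · rintro ⟨hdiag, hcard⟩ I hI
    have : Nonempty I := hI.to_subtype
    simpa using (hS.submatrix ((↑) : I → Fin n)).sign_det_of_card_pos_eigenvalues_le_one
      (fun i => hdiag i) (hS.card_pos_eigenvalues_submatrix_le_one hcard _)
  · intro h
    refine ⟨fun i => ?_, hS.card_pos_eigenvalues_le_one_of_principal_minors h⟩
    simpa [det_submatrix_singleton] using h {i} (Finset.singleton_nonempty i)
end

section
/- Let d ≥ 0 be an integer and let S = (s_ij) be a real symmetric n×n matrix. Then S has all diagonal entries nonnegative, at most one positive eigenvalue, and rank at most 1+d, if and only if there exist vectors p⁽¹⁾, …, p⁽ⁿ⁾ in ℝ^{1+d} such that p⁽ⁱ⁾·p⁽ⁱ⁾ ≥ 0 for all i and s_ij = p⁽ⁱ⁾·p⁽ʲ⁾ for all i, j, where · denotes the Minkowski inner product. -/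
open Matrix

/-- The Minkowski inner product on `ℝ^{1+d}` (coordinates indexed by `Fin (d+1)`, with
index `0` the time coordinate): `p·q = p₀q₀ - p₁q₁ - ⋯ - p_d q_d`. -/
def minkowski (d : ℕ) (p q : Fin (d + 1) → ℝ) : ℝ :=
  p 0 * q 0 - ∑ k : Fin d, p k.succ * q k.succ

/-!
Splitting each `p⁽ⁱ⁾` into its time and space parts, the Minkowski Gram matrices are exactly the
matrices `A Aᵀ - B Bᵀ` with `A` a single column and `B` of width `d`.

Such a matrix factors through `1 + d` columns, and its quadratic form is `≤ 0` on the hyperplane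
`Aᵀ x = 0`. That hyperplane meets the span of any two eigenvectors nontrivially, and on this span
the form would be positive definite if both eigenvalues were positive.

Conversely, the spectral theorem writes `S = ∑ λₖ uₖ uₖᵀ`; the positive eigenvalues give `A Aᵀ`
and the negative ones `B Bᵀ` once there are at most `d` negative eigenvalues. If there is a
negative one, the nonnegative trace forces a positive one, which takes one of the at most `1 + d`
nonzero eigenvalues.
-/

namespace Matrix

variable {ι κ μ : Type*} [Fintype ι]

theorem rank_mul_transpose_sub_mul_transpose_le [Fintype κ] [Fintype μ] {R : Type*} [CommRing R]
    [StrongRankCondition R] (A : Matrix ι κ R) (B : Matrix ι μ R) :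
    (A * Aᵀ - B * Bᵀ).rank ≤ Fintype.card κ + Fintype.card μ := by
  rw [sub_eq_add_neg, ← Matrix.neg_mul, ← fromCols_mul_fromRows]
  exact (rank_mul_le_left _ _).trans <| by simpa using rank_le_card_width (fromCols A (-B))

theorem dotProduct_mulVec_mul_transpose_sub [Fintype κ] [Fintype μ] (A : Matrix ι κ ℝ)
    (B : Matrix ι μ ℝ) (x : ι → ℝ) :
    x ⬝ᵥ (A * Aᵀ - B * Bᵀ) *ᵥ x = (x ᵥ* A) ⬝ᵥ (x ᵥ* A) - (x ᵥ* B) ⬝ᵥ (x ᵥ* B) := by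
  simp [sub_mulVec, dotProduct_sub, ← mulVec_mulVec, dotProduct_mulVec, mulVec_transpose]

omit [Fintype ι] in
theorem exists_mul_transpose_eq_sum_vecMulVec [Fintype κ] [DecidableEq κ] (w : κ → ι → ℝ)
    {r : ℕ} (hr : Fintype.card κ ≤ r) :
    ∃ B : Matrix ι (Fin r) ℝ, B * Bᵀ = ∑ k, vecMulVec (w k) (w k) := by
  obtain ⟨e⟩ : Nonempty (κ ↪ Fin r) := Function.Embedding.nonempty_of_card_le (by simpa using hr)
  let E : Matrix κ (Fin r) ℝ := (1 : Matrix (Fin r) (Fin r) ℝ).submatrix e id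
  have hE : E * Eᵀ = 1 := by
    rw [transpose_submatrix, transpose_one, ← submatrix_mul _ _ _ _ _ Function.bijective_id,
      Matrix.mul_one, submatrix_one_embedding]
  refine ⟨of (fun i k => w k i) * E, ?_⟩
  rw [transpose_mul, Matrix.mul_assoc, ← Matrix.mul_assoc E, hE, Matrix.one_mul]
  ext i j
  simp [mul_apply, vecMulVec_apply, Matrix.sum_apply]

omit [Fintype ι] in
theorem exists_mul_transpose_eq_sum_smul_vecMulVec [Fintype κ] [DecidableEq κ] (c : κ → ℝ)
    (hc : ∀ k, 0 ≤ c k) (w : κ → ι → ℝ) {r : ℕ} (hr : Fintype.card {k // 0 < c k} ≤ r) :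
    ∃ B : Matrix ι (Fin r) ℝ, B * Bᵀ = ∑ k, c k • vecMulVec (w k) (w k) := by
  obtain ⟨B, hB⟩ := exists_mul_transpose_eq_sum_vecMulVec
    (fun k : {k // 0 < c k} => √(c k) • w k) hr
  have hsqrt (k : κ) : vecMulVec (√(c k) • w k) (√(c k) • w k) = c k • vecMulVec (w k) (w k) := by
    rw [smul_vecMulVec, vecMulVec_smul, smul_smul, Real.mul_self_sqrt (hc k)]
  refine ⟨B, ?_⟩
  simp_rw [hB, hsqrt]
  rw [← Finset.sum_subtype {k | 0 < c k} (by simp) (fun k => c k • vecMulVec (w k) (w k)),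
    Finset.sum_filter_of_ne fun k _ hk => (hc k).lt_of_ne' fun h => by simp [h] at hk]

namespace IsHermitian

variable [DecidableEq ι] {S : Matrix ι ι ℝ} (hS : S.IsHermitian)
include hS

theorem eq_sum_eigenvalues_smul_vecMulVec :
    S = ∑ k, hS.eigenvalues k • vecMulVec ⇑(hS.eigenvectorBasis k) ⇑(hS.eigenvectorBasis k) := by
  conv_lhs => rw [hS.spectral_theorem]
  ext i j
  simp [mul_apply, vecMulVec_apply, Matrix.sum_apply, diagonal_apply, mul_comm, mul_assoc]

theorem exists_eq_mul_transpose_sub_mul_transpose {r s : ℕ}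
    (hpos : Fintype.card {k // 0 < hS.eigenvalues k} ≤ r)
    (hneg : Fintype.card {k // hS.eigenvalues k < 0} ≤ s) :
    ∃ (A : Matrix ι (Fin r) ℝ) (B : Matrix ι (Fin s) ℝ), S = A * Aᵀ - B * Bᵀ := by
  set u := fun k => ⇑(hS.eigenvectorBasis k)
  obtain ⟨A, hA⟩ := exists_mul_transpose_eq_sum_smul_vecMulVec (fun k => (hS.eigenvalues k)⁺)
    (fun k => posPart_nonneg _) u (by simpa only [posPart_pos_iff] using hpos)
  obtain ⟨B, hB⟩ := exists_mul_transpose_eq_sum_smul_vecMulVec (fun k => (hS.eigenvalues k)⁻)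
    (fun k => negPart_nonneg _) u (by simpa only [negPart_pos_iff] using hneg)
  refine ⟨A, B, ?_⟩
  rw [hA, hB, ← Finset.sum_sub_distrib]
  simp_rw [← sub_smul, posPart_sub_negPart]
  exact hS.eq_sum_eigenvalues_smul_vecMulVec

theorem card_pos_add_card_neg_eigenvalues :
    Fintype.card {k // 0 < hS.eigenvalues k} + Fintype.card {k // hS.eigenvalues k < 0} =
      S.rank := by
  rw [hS.rank_eq_card_non_zero_eigs, ← Fintype.card_subtype_or_disjoint]
  · exact Fintype.card_congr <|
      Equiv.subtypeEquivRight fun k => by rw [ne_comm, ne_iff_lt_or_gt, or_comm]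
  · exact Pi.disjoint_iff.mpr fun k => Prop.disjoint_iff.mpr fun ⟨hpos, hneg⟩ => hpos.not_gt hneg

theorem exists_pos_eigenvalue (htr : 0 ≤ S.trace) {k : ι} (hk : hS.eigenvalues k < 0) :
    ∃ j, 0 < hS.eigenvalues j := by
  by_contra! h
  have hsum : ∑ j, hS.eigenvalues j < 0 :=
    Finset.sum_neg' (fun j _ => h j) ⟨k, Finset.mem_univ k, hk⟩
  rw [hS.trace_eq_sum_eigenvalues] at htr
  simp only [Real.ringHom_apply] at htr
  linarith

theorem card_neg_eigenvalues_le (htr : 0 ≤ S.trace) {d : ℕ}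
    (hpos : Fintype.card {k // 0 < hS.eigenvalues k} ≤ 1) (hrank : S.rank ≤ 1 + d) :
    Fintype.card {k // hS.eigenvalues k < 0} ≤ d := by
  obtain hneg | hneg := Nat.eq_zero_or_pos (Fintype.card {k // hS.eigenvalues k < 0})
  · omega
  obtain ⟨⟨k, hk⟩⟩ := Fintype.card_pos_iff.mp hneg
  obtain ⟨j, hj⟩ := hS.exists_pos_eigenvalue htr hk
  have : 0 < Fintype.card {k // 0 < hS.eigenvalues k} := Fintype.card_pos_iff.mpr ⟨⟨j, hj⟩⟩
  have := hS.card_pos_add_card_neg_eigenvalues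
  omega

theorem dotProduct_eigenvectorBasis (a b : ι) :
    ⇑(hS.eigenvectorBasis a) ⬝ᵥ ⇑(hS.eigenvectorBasis b) = if a = b then 1 else 0 := by
  simpa [EuclideanSpace.inner_eq_star_dotProduct, dotProduct_comm] using
    orthonormal_iff_ite.mp hS.eigenvectorBasis.orthonormal a b

theorem dotProduct_mulVec_smul_add_smul_eigenvectorBasis {a b : ι} (hab : a ≠ b) (c c' : ℝ) :
    (c • ⇑(hS.eigenvectorBasis a) + c' • ⇑(hS.eigenvectorBasis b)) ⬝ᵥ
        S *ᵥ (c • ⇑(hS.eigenvectorBasis a) + c' • ⇑(hS.eigenvectorBasis b)) =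
      c ^ 2 * hS.eigenvalues a + c' ^ 2 * hS.eigenvalues b := by
  simp only [mulVec_add, mulVec_smul, hS.mulVec_eigenvectorBasis, add_dotProduct, dotProduct_add,
    smul_dotProduct, dotProduct_smul, hS.dotProduct_eigenvectorBasis, hab, hab.symm, if_true,
    if_false, smul_eq_mul]
  ring

theorem card_pos_eigenvalues_le_one (ℓ : ι → ℝ) (h : ∀ x, ℓ ⬝ᵥ x = 0 → x ⬝ᵥ S *ᵥ x ≤ 0) :
    Fintype.card {k // 0 < hS.eigenvalues k} ≤ 1 := by
  rw [Fintype.card_le_one_iff]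
  rintro ⟨a, ha⟩ ⟨b, hb⟩
  by_contra hne
  have hab : a ≠ b := fun h => hne (Subtype.ext h)
  set u := fun k => ⇑(hS.eigenvectorBasis k)
  obtain ⟨c, c', hcc', hℓ⟩ :
      ∃ c c' : ℝ, (c ≠ 0 ∨ c' ≠ 0) ∧ c * (ℓ ⬝ᵥ u a) + c' * (ℓ ⬝ᵥ u b) = 0 := by
    by_cases h0 : ℓ ⬝ᵥ u a = 0
    · exact ⟨1, 0, by simp, by simp [h0]⟩
    · exact ⟨ℓ ⬝ᵥ u b, -(ℓ ⬝ᵥ u a), Or.inr (neg_ne_zero.mpr h0), by ring⟩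
  have hquad := h (c • u a + c' • u b) (by simpa [dotProduct_add, dotProduct_smul] using hℓ)
  rw [hS.dotProduct_mulVec_smul_add_smul_eigenvectorBasis hab] at hquad
  rcases hcc' with hc | hc
  · linarith [mul_pos (sq_pos_of_ne_zero hc) ha, mul_nonneg (sq_nonneg c') hb.le]
  · linarith [mul_pos (sq_pos_of_ne_zero hc) hb, mul_nonneg (sq_nonneg c) ha.le]

theorem card_pos_eigenvalues_le_one_of_eq_mul_transpose_sub [Fintype μ] (A : Matrix ι (Fin 1) ℝ)
    (B : Matrix ι μ ℝ) (hAB : S = A * Aᵀ - B * Bᵀ) :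
    Fintype.card {k // 0 < hS.eigenvalues k} ≤ 1 := by
  refine hS.card_pos_eigenvalues_le_one (fun i => A i 0) fun x hx => ?_
  have hxA : x ᵥ* A = 0 := funext fun m => by
    rw [Subsingleton.elim m 0]
    exact (dotProduct_comm _ _).trans hx
  rw [hAB, dotProduct_mulVec_mul_transpose_sub, hxA, zero_dotProduct, zero_sub, neg_nonpos]
  exact dotProduct_self_star_nonneg _

end IsHermitian

end Matrix

theorem exists_minkowski_gram_iff {ι : Type*} (d : ℕ) (S : Matrix ι ι ℝ) :
    (∃ p : ι → Fin (d + 1) → ℝ, ∀ i j, S i j = minkowski d (p i) (p j)) ↔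
      ∃ (A : Matrix ι (Fin 1) ℝ) (B : Matrix ι (Fin d) ℝ), S = A * Aᵀ - B * Bᵀ := by
  constructor
  · rintro ⟨p, hp⟩
    refine ⟨of fun i _ => p i 0, of fun i k => p i k.succ, ?_⟩
    ext i j
    simp [hp, minkowski, mul_apply]
  · rintro ⟨A, B, rfl⟩
    refine ⟨fun i => Fin.cons (A i 0) (B i), fun i j => ?_⟩
    simp [minkowski, mul_apply]

/-- Lemma (Gram matrices of momentum vectors): a real symmetric `n × n` matrix `S` has all
diagonal entries nonnegative, at most one positive eigenvalue, and rank at most `1 + d`,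
if and only if `S` is the Gram matrix, with respect to the Minkowski inner product, of `n`
vectors `p⁽¹⁾,…,p⁽ⁿ⁾` in `ℝ^{1+d}` satisfying `p⁽ⁱ⁾·p⁽ⁱ⁾ ≥ 0`. -/
theorem mandelstam_iff_gram (n d : ℕ) (S : Matrix (Fin n) (Fin n) ℝ)
    (hS : S.IsHermitian) :
    ((∀ i, 0 ≤ S i i) ∧ Nat.card {i : Fin n // 0 < hS.eigenvalues i} ≤ 1 ∧
        S.rank ≤ 1 + d) ↔
      ∃ p : Fin n → (Fin (d + 1) → ℝ),
        (∀ i, 0 ≤ minkowski d (p i) (p i)) ∧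
        (∀ i j, S i j = minkowski d (p i) (p j)) := by
  rw [Nat.card_eq_fintype_card]
  constructor
  · rintro ⟨hdiag, hpos, hrank⟩
    have htr : 0 ≤ S.trace := Finset.sum_nonneg fun i _ => hdiag i
    obtain ⟨p, hp⟩ := (exists_minkowski_gram_iff d S).mpr <|
      hS.exists_eq_mul_transpose_sub_mul_transpose hpos (hS.card_neg_eigenvalues_le htr hpos hrank)
    exact ⟨p, fun i => hp i i ▸ hdiag i, hp⟩
  · rintro ⟨p, hp_nonneg, hp⟩
    obtain ⟨A, B, hAB⟩ := (exists_minkowski_gram_iff d S).mp ⟨p, hp⟩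
    refine ⟨fun i => (hp i i).symm ▸ hp_nonneg i,
      hS.card_pos_eigenvalues_le_one_of_eq_mul_transpose_sub A B hAB, ?_⟩
    simpa [hAB, add_comm] using rank_mul_transpose_sub_mul_transpose_le A B
end

section
/- Let S = (s_ij) be a real symmetric n×n matrix with all diagonal entries nonnegative and at most one positive eigenvalue. Then for all pairwise distinct indices i, j, k one has s_ij·s_ik·s_jk ≥ 0. -/
/-!
If `S` has at most one positive eigenvalue, its quadratic form is nonpositive on the hyperplane
orthogonal to an eigenvector `v` of the positive eigenvalue (any `v` if there is none), hence also
on a hyperplane of the coordinate space of the principal `3 × 3` submatrix on `i, j, k`. But if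
`p = sᵢⱼ`, `q = sᵢₖ`, `r = sⱼₖ` had `pqr < 0`, the vectors `(r z₀, q z₁, p z₂)` with
`z₀ + z₁ + z₂ = 0` would span a plane on which that form is positive, and a plane meets every
hyperplane of a three-dimensional space nontrivially.
-/

open Matrix

namespace Matrix

variable {ι κ : Type*} [Fintype ι] [Fintype κ]

theorem IsHermitian.dotProduct_mulVec_self_eq_sum_eigenvalues [DecidableEq ι]
    {S : Matrix ι ι ℝ} (hS : S.IsHermitian) (x : ι → ℝ) :
    x ⬝ᵥ (S *ᵥ x) = ∑ l, hS.eigenvalues l * (x ⬝ᵥ ⇑(hS.eigenvectorBasis l)) ^ 2 := by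
  have hUx : ∀ l, ((hS.eigenvectorUnitary : Matrix ι ι ℝ)ᵀ *ᵥ x) l =
      x ⬝ᵥ ⇑(hS.eigenvectorBasis l) := fun l => dotProduct_comm _ _
  conv_lhs => rw [hS.spectral_theorem, Unitary.conjStarAlgAut_apply]
  rw [← mulVec_mulVec, ← mulVec_mulVec, dotProduct_mulVec, ← mulVec_transpose,
    star_eq_conjTranspose, conjTranspose_eq_transpose_of_trivial, dotProduct]
  simp only [mulVec_diagonal, hUx, Function.comp_apply, RCLike.ofReal_real_eq_id, id]
  exact Finset.sum_congr rfl fun l _ => by ring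

theorem IsHermitian.exists_forall_dotProduct_eq_zero_dotProduct_mulVec_nonpos [DecidableEq ι]
    {S : Matrix ι ι ℝ} (hS : S.IsHermitian)
    (hpos : Nat.card {l // 0 < hS.eigenvalues l} ≤ 1) :
    ∃ v : ι → ℝ, ∀ x, x ⬝ᵥ v = 0 → x ⬝ᵥ (S *ᵥ x) ≤ 0 := by
  have hsub : Subsingleton {l // 0 < hS.eigenvalues l} :=
    Finite.card_le_one_iff_subsingleton.mp hpos
  by_cases h : ∃ l₀, 0 < hS.eigenvalues l₀
  · obtain ⟨l₀, hl₀⟩ := h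
    have hunique : ∀ l, 0 < hS.eigenvalues l → l = l₀ := fun l hl =>
      congrArg Subtype.val (@Subsingleton.elim _ hsub ⟨l, hl⟩ ⟨l₀, hl₀⟩)
    refine ⟨hS.eigenvectorBasis l₀, fun x hx => ?_⟩
    rw [hS.dotProduct_mulVec_self_eq_sum_eigenvalues]
    refine Finset.sum_nonpos fun l _ => ?_
    rcases eq_or_ne l l₀ with rfl | hl
    · simp [hx]
    · exact mul_nonpos_of_nonpos_of_nonneg (not_lt.1 (mt (hunique l) hl)) (sq_nonneg _)
  · push Not at h
    refine ⟨0, fun x _ => ?_⟩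
    rw [hS.dotProduct_mulVec_self_eq_sum_eigenvalues]
    exact Finset.sum_nonpos fun l _ => mul_nonpos_of_nonpos_of_nonneg (h l) (sq_nonneg _)

theorem sum_smul_single_one_dotProduct {R : Type*} [CommSemiring R] [DecidableEq ι]
    (f : κ → ι) (y : κ → R) (w : ι → R) :
    (∑ m, y m • Pi.single (f m) 1) ⬝ᵥ w = y ⬝ᵥ (w ∘ f) := by
  simp only [sum_dotProduct, smul_dotProduct, single_one_dotProduct]
  rfl

theorem submatrix_dotProduct_mulVec_nonpos {S : Matrix ι ι ℝ} {v : ι → ℝ}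
    (hv : ∀ x, x ⬝ᵥ v = 0 → x ⬝ᵥ (S *ᵥ x) ≤ 0) (f : κ → ι) (y : κ → ℝ)
    (hy : y ⬝ᵥ (v ∘ f) = 0) : y ⬝ᵥ (S.submatrix f f *ᵥ y) ≤ 0 := by
  classical
  set x := ∑ m, y m • Pi.single (f m) (1 : ℝ)
  have hSx : (S *ᵥ x) ∘ f = S.submatrix f f *ᵥ y := by
    ext m
    simp only [Function.comp_apply, mulVec, dotProduct_comm _ x, x, sum_smul_single_one_dotProduct]
    exact dotProduct_comm _ _
  have := hv x (by rwa [sum_smul_single_one_dotProduct])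
  rwa [sum_smul_single_one_dotProduct, hSx] at this

theorem exists_ne_zero_dotProduct_eq_zero_of_fin_three {K : Type*} [Field K] (a b : Fin 3 → K) :
    ∃ z ≠ 0, z ⬝ᵥ a = 0 ∧ z ⬝ᵥ b = 0 := by
  obtain ⟨z, hz, hMz⟩ := exists_mulVec_eq_zero_iff.mpr
    (det_eq_zero_of_row_eq_zero (A := Matrix.of ![a, b, 0]) 2 fun _ => rfl)
  refine ⟨z, hz, ?_, ?_⟩
  · simpa [dotProduct_comm] using congrFun hMz 0
  · simpa [dotProduct_comm] using congrFun hMz 1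

theorem IsHermitian.triple_product_nonneg_of_fin_three {T : Matrix (Fin 3) (Fin 3) ℝ}
    (hT : T.IsHermitian) (hdiag : ∀ i, 0 ≤ T i i) {w : Fin 3 → ℝ}
    (hw : ∀ y, y ⬝ᵥ w = 0 → y ⬝ᵥ (T *ᵥ y) ≤ 0) : 0 ≤ T 0 1 * T 0 2 * T 1 2 := by
  by_contra! hneg
  set p := T 0 1
  set q := T 0 2
  set r := T 1 2
  obtain ⟨z, hz, hzsum, hzw⟩ :=
    exists_ne_zero_dotProduct_eq_zero_of_fin_three 1 ![r * w 0, q * w 1, p * w 2]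
  -- On the plane `∑ zᵢ = 0` the off-diagonal part of the form at `y` is
  -- `2pqr (z₀z₁ + z₀z₂ + z₁z₂) = -pqr ‖z‖²`, which is positive when `pqr < 0`.
  set y : Fin 3 → ℝ := ![r * z 0, q * z 1, p * z 2]
  have hyw : y ⬝ᵥ w = 0 := by
    simp only [dotProduct, Fin.sum_univ_three, cons_val_zero, cons_val_one, cons_val, y] at hzw ⊢
    linear_combination hzw
  have hz2 : 0 < z 0 ^ 2 + z 1 ^ 2 + z 2 ^ 2 := by
    simpa [dotProduct, Fin.sum_univ_three, sq] using dotProduct_self_star_pos_iff.mpr hz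
  have hsym : ∀ a b, T b a = T a b := fun a b => by simpa using hT.apply a b
  have hquad : y ⬝ᵥ (T *ᵥ y) = T 0 0 * y 0 ^ 2 + T 1 1 * y 1 ^ 2 + T 2 2 * y 2 ^ 2
      - p * q * r * (z 0 ^ 2 + z 1 ^ 2 + z 2 ^ 2) := by
    simp only [dotProduct, Fin.sum_univ_three, Pi.one_apply, mul_one] at hzsum
    simp only [dotProduct, mulVec, Fin.sum_univ_three, cons_val_zero, cons_val_one, cons_val,
      hsym 0 1, hsym 0 2, hsym 1 2, y]
    linear_combination p * q * r * (z 0 + z 1 + z 2) * hzsum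
  have := hw y hyw
  nlinarith [mul_nonneg (hdiag 0) (sq_nonneg (y 0)), mul_nonneg (hdiag 1) (sq_nonneg (y 1)),
    mul_nonneg (hdiag 2) (sq_nonneg (y 2)), mul_pos (neg_pos.2 hneg) hz2]

end Matrix

/-- If a real symmetric `n × n` matrix `S` has all diagonal entries nonnegative and at
most one positive eigenvalue, then `s_ij · s_ik · s_jk ≥ 0` for all pairwise distinct
indices `i, j, k`. -/
theorem triple_product_nonneg (n : ℕ) (S : Matrix (Fin n) (Fin n) ℝ)
    (hS : S.IsHermitian) (hdiag : ∀ i, 0 ≤ S i i)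
    (hpos : Nat.card {i : Fin n // 0 < hS.eigenvalues i} ≤ 1) :
    ∀ i j k : Fin n, i ≠ j → i ≠ k → j ≠ k → 0 ≤ S i j * S i k * S j k := by
  intro i j k _ _ _
  obtain ⟨v, hv⟩ := hS.exists_forall_dotProduct_eq_zero_dotProduct_mulVec_nonpos hpos
  simpa using (hS.submatrix ![i, j, k]).triple_product_nonneg_of_fin_three
    (fun m => by fin_cases m <;> simp [hdiag]) (submatrix_dotProduct_mulVec_nonpos hv _)
end

section
/- Let S = (s_ij) be a real symmetric n×n matrix with all diagonal entries equal to zero and at most one positive eigenvalue. If s_ij = 0 for some indices i ≠ j, then s_ik·s_jl = s_il·s_jk for all indices k and l. -/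
/-!
By the spectral theorem, a real symmetric matrix with at most one positive eigenvalue can be
written as `S a b = w a * w b - ⟪v a, v b⟫` for a vector `w` and a family of vectors `v` in a
Euclidean space. The vanishing of `S i i`, `S j j` and `S i j` says that `‖v i‖ = |w i|`,
`‖v j‖ = |w j|` and `⟪v i, v j⟫ = w i * w j`, the equality case of Cauchy–Schwarz, which forces
`w j • v i = w i • v j`. Hence rows `i` and `j` of `S` are proportional (row `i` vanishes when
`w i = w j = 0`), so all their `2 × 2` minors vanish.
-/

open Matrix
open scoped RealInnerProductSpace

theorem smul_eq_smul_of_inner_eq_mul {E : Type*} [NormedAddCommGroup E] [InnerProductSpace ℝ E]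
    {x y : E} {a b : ℝ} (hx : ⟪x, x⟫ = a * a) (hy : ⟪y, y⟫ = b * b) (hxy : ⟪x, y⟫ = a * b) :
    b • x = a • y := by
  rw [← sub_eq_zero, ← inner_self_eq_zero (𝕜 := ℝ)]
  simp only [inner_sub_left, inner_sub_right, real_inner_smul_left, real_inner_smul_right,
    real_inner_comm x y, hx, hy, hxy]
  ring

theorem mul_eq_mul_of_smul_eq_smul {ι : Type*} {x y : ι → ℝ} {c d : ℝ} (hcd : c ≠ 0 ∨ d ≠ 0)
    (h : c • x = d • y) (k l : ι) : x k * y l = x l * y k := by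
  have hk := congrFun h k
  have hl := congrFun h l
  simp only [Pi.smul_apply, smul_eq_mul] at hk hl
  rcases hcd with hc | hd
  · apply mul_left_cancel₀ hc
    linear_combination y l * hk - y k * hl
  · apply mul_left_cancel₀ hd
    linear_combination x l * hk - x k * hl

theorem Matrix.mul_eq_mul_of_eq_mul_sub_inner {ι E : Type*} [NormedAddCommGroup E]
    [InnerProductSpace ℝ E] {S : Matrix ι ι ℝ} {w : ι → ℝ} {v : ι → E}
    (hS : ∀ a b, S a b = w a * w b - ⟪v a, v b⟫) {i j : ι} (hi : S i i = 0) (hj : S j j = 0)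
    (hij : S i j = 0) (k l : ι) : S i k * S j l = S i l * S j k := by
  have hvi : ⟪v i, v i⟫ = w i * w i := by linarith [hS i i]
  have hvj : ⟪v j, v j⟫ = w j * w j := by linarith [hS j j]
  have hvij : ⟪v i, v j⟫ = w i * w j := by linarith [hS i j]
  by_cases hw : w i = 0 ∧ w j = 0
  · have hvi0 : v i = 0 := inner_self_eq_zero.mp (by rw [hvi, hw.1, mul_zero])
    have hrow : ∀ a, S i a = 0 := fun a => by rw [hS, hvi0, hw.1, inner_zero_left]; ring
    rw [hrow k, hrow l, zero_mul, zero_mul]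
  · have hv := smul_eq_smul_of_inner_eq_mul hvi hvj hvij
    refine mul_eq_mul_of_smul_eq_smul (c := w j) (d := w i) (by tauto) (funext fun a => ?_) k l
    have hva := congrArg (⟪·, v a⟫) hv
    simp only [real_inner_smul_left] at hva
    simp only [Pi.smul_apply, smul_eq_mul, hS]
    linear_combination -hva

theorem Matrix.IsHermitian.apply_eq_sum_eigenvalues_mul {ι : Type*} [Fintype ι] [DecidableEq ι]
    {S : Matrix ι ι ℝ} (hS : S.IsHermitian) (a b : ι) :
    S a b = ∑ m, hS.eigenvalues m * hS.eigenvectorBasis m a * hS.eigenvectorBasis m b := by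
  conv_lhs => rw [hS.spectral_theorem]
  simp only [RCLike.ofReal_real_eq_id, CompTriple.comp_eq, Unitary.conjStarAlgAut_apply,
    mul_apply, eigenvectorUnitary_apply, diagonal_apply, mul_ite, mul_zero, Finset.sum_ite_eq',
    Finset.mem_univ, ↓reduceIte, star_apply, star_trivial]
  exact Finset.sum_congr rfl fun m _ => by ring

theorem Fintype.sum_mul_sum_eq_sum_sq_mul {ι : Type*} [Fintype ι] {c : ι → ℝ}
    (hc : ∀ m m', c m ≠ 0 → c m' ≠ 0 → m = m') (x y : ι → ℝ) :
    (∑ m, c m * x m) * (∑ m, c m * y m) = ∑ m, c m ^ 2 * x m * y m := by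
  rw [Fintype.sum_mul_sum]
  refine Finset.sum_congr rfl fun m _ => ?_
  rw [Finset.sum_eq_single m]
  · ring
  · intro m' _ hm'
    by_cases h : c m = 0
    · rw [h]; ring
    · rw [not_not.mp fun h' => hm' (hc m' m h' h)]; ring
  · simp

theorem Matrix.IsHermitian.exists_eq_mul_sub_inner {ι : Type*} [Fintype ι] [DecidableEq ι]
    {S : Matrix ι ι ℝ} (hS : S.IsHermitian)
    (hpos : Nat.card {m // 0 < hS.eigenvalues m} ≤ 1) :
    ∃ (w : ι → ℝ) (v : ι → EuclideanSpace ℝ ι), ∀ a b, S a b = w a * w b - ⟪v a, v b⟫ := by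
  set μ := hS.eigenvalues
  set u := hS.eigenvectorBasis
  have hμ : ∀ m m', 0 < μ m → 0 < μ m' → m = m' := fun m m' hm hm' =>
    congrArg Subtype.val ((Finite.card_le_one_iff_subsingleton.mp hpos).elim ⟨m, hm⟩ ⟨m', hm'⟩)
  set c := fun m => √(μ m)⁺
  set d := fun m => √(μ m)⁻
  have hc : ∀ m m', c m ≠ 0 → c m' ≠ 0 → m = m' := fun m m' hm hm' =>
    hμ m m' (by simpa [c] using hm) (by simpa [c] using hm')
  refine ⟨fun a => ∑ m, c m * u m a, fun a => WithLp.toLp 2 fun m => d m * u m a, fun a b => ?_⟩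
  rw [Fintype.sum_mul_sum_eq_sum_sq_mul hc, PiLp.inner_apply, hS.apply_eq_sum_eigenvalues_mul,
    ← Finset.sum_sub_distrib]
  refine Finset.sum_congr rfl fun m _ => ?_
  simp only [c, d, Real.sq_sqrt (posPart_nonneg _), Real.inner_apply]
  linear_combination (u m a * u m b) * (posPart_sub_negPart (μ m)).symm
    + (u m a * u m b) * Real.mul_self_sqrt (negPart_nonneg (μ m))

theorem rank_one_blocks_general (n : ℕ) (S : Matrix (Fin n) (Fin n) ℝ)
    (hS : S.IsHermitian) (hdiag : ∀ i, S i i = 0)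
    (hpos : Nat.card {i : Fin n // 0 < hS.eigenvalues i} ≤ 1)
    (i j : Fin n) (hzero : S i j = 0) :
    ∀ k l : Fin n, S i k * S j l = S i l * S j k := by
  obtain ⟨w, v, hwv⟩ := hS.exists_eq_mul_sub_inner hpos
  exact S.mul_eq_mul_of_eq_mul_sub_inner hwv (hdiag i) (hdiag j) hzero

/-- If a real symmetric `n × n` matrix `S` has all diagonal entries zero and at most one
positive eigenvalue, and `s_ij = 0` for some `i ≠ j`, then `s_ik·s_jl = s_il·s_jk` for all
`k, l`. -/
theorem rank_one_blocks (n : ℕ) (S : Matrix (Fin n) (Fin n) ℝ)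
    (hS : S.IsHermitian) (hdiag : ∀ i, S i i = 0)
    (hpos : Nat.card {i : Fin n // 0 < hS.eigenvalues i} ≤ 1)
    (i j : Fin n) (hij : i ≠ j) (hzero : S i j = 0) :
    ∀ k l : Fin n, S i k * S j l = S i l * S j k :=
  rank_one_blocks_general n S hS hdiag hpos i j hzero
end

section
/- Let S = (s_ij) be a real symmetric n×n matrix with all diagonal entries equal to zero and at most one positive eigenvalue, and let i, j, k be pairwise distinct indices such that the i-th row of S is not the zero vector. If s_ij = 0 and s_ik = 0, then s_jk = 0. -/
/-!
With at most one positive eigenvalue, the form `x ↦ xᵀ S x` is `≤ 0` on the orthogonal complement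
of a single eigenvector, so it is not positive definite on any plane: if `uᵀ S u > 0` and
`uᵀ S v = 0` then `vᵀ S v ≤ 0`. Pick `l` with `s_il ≠ 0` and put `u = e_i + s_il e_l`,
`v = β e_i + e_j + s_jk e_k`, with `β` chosen so that `uᵀ S v = 0`. The zero diagonal and
`s_ij = s_ik = 0` give `uᵀ S u = 2 s_il² > 0` and `vᵀ S v = 2 s_jk²`, hence `s_jk = 0`.
-/

open Matrix

theorem Matrix.single_dotProduct_mulVec_single {n R : Type*} [Fintype n] [DecidableEq n]
    [CommSemiring R] (S : Matrix n n R) (p q : n) (a b : R) :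
    Pi.single p a ⬝ᵥ S *ᵥ Pi.single q b = a * S p q * b := by
  simp only [single_dotProduct, mulVec, dotProduct_single, mul_assoc]

namespace Matrix.IsHermitian

variable {n : Type*} [Fintype n] {S : Matrix n n ℝ}

theorem dotProduct_mulVec_comm (hS : S.IsHermitian) (u v : n → ℝ) :
    u ⬝ᵥ S *ᵥ v = v ⬝ᵥ S *ᵥ u := by
  rw [dotProduct_mulVec, dotProduct_comm, ← mulVec_transpose,
    ← conjTranspose_eq_transpose_of_trivial, hS.eq]

variable [DecidableEq n]

theorem dotProduct_mulVec_self_eq_sum (hS : S.IsHermitian) (x : n → ℝ) :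
    x ⬝ᵥ S *ᵥ x = ∑ m, hS.eigenvalues m * (⇑(hS.eigenvectorBasis m) ⬝ᵥ x) ^ 2 := by
  conv_lhs => rw [hS.spectral_theorem]
  set U := (hS.eigenvectorUnitary : Matrix n n ℝ)
  have hU : star U *ᵥ x = fun m => ⇑(hS.eigenvectorBasis m) ⬝ᵥ x := by
    ext m
    simp [mulVec, dotProduct, U]
  rw [Unitary.conjStarAlgAut_apply, ← mulVec_mulVec, ← mulVec_mulVec, dotProduct_mulVec,
    ← mulVec_transpose, ← conjTranspose_eq_transpose_of_trivial, ← star_eq_conjTranspose, hU,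
    dotProduct]
  exact Finset.sum_congr rfl fun m _ => by
    simp only [mulVec_diagonal, Function.comp_apply, RCLike.ofReal_real_eq_id, id]; ring

theorem dotProduct_mulVec_self_nonpos (hS : S.IsHermitian) {x : n → ℝ}
    (hx : ∀ m, 0 < hS.eigenvalues m → ⇑(hS.eigenvectorBasis m) ⬝ᵥ x = 0) :
    x ⬝ᵥ S *ᵥ x ≤ 0 := by
  rw [hS.dotProduct_mulVec_self_eq_sum]
  refine Finset.sum_nonpos fun m _ => ?_
  rcases le_or_gt (hS.eigenvalues m) 0 with hm | hm
  · exact mul_nonpos_of_nonpos_of_nonneg hm (sq_nonneg _)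
  · simp [hx m hm]

theorem dotProduct_mulVec_self_nonpos_of_dotProduct_mulVec_eq_zero (hS : S.IsHermitian)
    (hpos : Nat.card {m // 0 < hS.eigenvalues m} ≤ 1) {u v : n → ℝ}
    (hu : 0 < u ⬝ᵥ S *ᵥ u) (huv : u ⬝ᵥ S *ᵥ v = 0) : v ⬝ᵥ S *ᵥ v ≤ 0 := by
  obtain ⟨p, hp⟩ : ∃ p, 0 < hS.eigenvalues p := by
    by_contra! h
    exact hu.not_ge (hS.dotProduct_mulVec_self_nonpos fun m hm => absurd hm (h m).not_gt)
  have huniq : ∀ m, 0 < hS.eigenvalues m → m = p := fun m hm =>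
    congrArg Subtype.val (Finite.card_le_one_iff_subsingleton.mp hpos |>.elim ⟨m, hm⟩ ⟨p, hp⟩)
  set w := ⇑(hS.eigenvectorBasis p)
  have hwu : w ⬝ᵥ u ≠ 0 := fun h =>
    hu.not_ge (hS.dotProduct_mulVec_self_nonpos fun m hm => huniq m hm ▸ h)
  have hx := hS.dotProduct_mulVec_self_nonpos (x := (w ⬝ᵥ v) • u - (w ⬝ᵥ u) • v) fun m hm => by
    rw [huniq m hm, dotProduct_sub, dotProduct_smul, dotProduct_smul, smul_eq_mul, smul_eq_mul,
      mul_comm, sub_self]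
  simp only [mulVec_sub, mulVec_smul, dotProduct_sub, sub_dotProduct, dotProduct_smul,
    smul_dotProduct, smul_eq_mul, huv, hS.dotProduct_mulVec_comm v u] at hx
  nlinarith [sq_pos_of_ne_zero hwu, sq_nonneg (w ⬝ᵥ v)]

end Matrix.IsHermitian

theorem zero_transitive_general (n : ℕ) (S : Matrix (Fin n) (Fin n) ℝ)
    (hS : S.IsHermitian) (hdiag : ∀ i, S i i = 0)
    (hpos : Nat.card {i : Fin n // 0 < hS.eigenvalues i} ≤ 1)
    (i j k : Fin n)
    (hrow : S i ≠ 0) (h1 : S i j = 0) (h2 : S i k = 0) :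
    S j k = 0 := by
  obtain ⟨l, hl⟩ : ∃ l, S i l ≠ 0 := Function.ne_iff.mp hrow
  have hsymm (p q : Fin n) : S q p = S p q := hS.apply p q
  set a := S j k
  set b := S i l
  set β := -(S l j + a * S l k) / b
  set u : Fin n → ℝ := Pi.single i 1 + Pi.single l b
  set v : Fin n → ℝ := Pi.single i β + Pi.single j 1 + Pi.single k a
  have hu : u ⬝ᵥ S *ᵥ u = 2 * b ^ 2 := by
    simp only [u, mulVec_add, dotProduct_add, add_dotProduct, single_dotProduct_mulVec_single,
      hdiag, hsymm i l]
    ring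
  have huv : u ⬝ᵥ S *ᵥ v = 0 := by
    simp only [u, v, mulVec_add, dotProduct_add, add_dotProduct, single_dotProduct_mulVec_single,
      hdiag, h1, h2, hsymm i l, β]
    field_simp
    ring
  have hv : v ⬝ᵥ S *ᵥ v = 2 * a ^ 2 := by
    simp only [v, mulVec_add, dotProduct_add, add_dotProduct, single_dotProduct_mulVec_single,
      hdiag, h1, h2, hsymm i j, hsymm i k, hsymm j k]
    ring
  have hv_nonpos := hS.dotProduct_mulVec_self_nonpos_of_dotProduct_mulVec_eq_zero hpos
    (by rw [hu]; positivity) huv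
  rw [hv] at hv_nonpos
  exact pow_eq_zero_iff two_ne_zero |>.mp (by linarith [sq_nonneg a])

/-- Let `S` be a real symmetric `n × n` matrix with zero diagonal and at most one positive
eigenvalue, and let `i, j, k` be pairwise distinct with the `i`-th row of `S` nonzero.
If `s_ij = 0` and `s_ik = 0`, then `s_jk = 0`. -/
theorem zero_transitive (n : ℕ) (S : Matrix (Fin n) (Fin n) ℝ)
    (hS : S.IsHermitian) (hdiag : ∀ i, S i i = 0)
    (hpos : Nat.card {i : Fin n // 0 < hS.eigenvalues i} ≤ 1)
    (i j k : Fin n) (hij : i ≠ j) (hik : i ≠ k) (hjk : j ≠ k)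
    (hrow : S i ≠ 0) (h1 : S i j = 0) (h2 : S i k = 0) :
    S j k = 0 :=
  zero_transitive_general n S hS hdiag hpos i j k hrow h1 h2
end

section
/- Let S = (s_ij) be a real symmetric n×n matrix with all diagonal entries equal to zero and at most one positive eigenvalue, and let N = { i : the i-th row of S is not the zero vector }. Then: (a) the relation on N defined by i ~ j if and only if (i = j or s_ij = 0) is an equivalence relation on N; and (b) there exists a sign vector σ : {1,…,n} → {−1,+1} such that s_ij·σ_i·σ_j > 0 for all indices i, j with s_ij ≠ 0. -/
open Matrix

/-!
At most one positive eigenvalue makes the quadratic form `q` of `S` nonpositive on a hyperplane,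
so `q x > 0` forces the reverse Cauchy–Schwarz inequality `q x * q y ≤ B x y ^ 2`. This passes to
principal submatrices along arbitrary index maps, and testing it on zero-diagonal `3 × 3` and
`4 × 4` patterns gives `S i j * S j k * S k i ≥ 0`, `S i k * S j l = S i l * S j k` when
`S i j = S k l = 0`, and `S i k * S j l = 0` when `S i j = S j k = 0`; the last is the
transitivity in (a). Hence every 4-cycle product is nonnegative, and for an edge `S i j ≠ 0` the
vector `w u = S u i + S i j * S u j` satisfies `S u v * w u * w v > 0` on every edge: the signs
of `w` are the required `σ`.
-/

namespace Matrix

section Fintype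

variable {ι κ : Type*} [Fintype ι] [Fintype κ]

def ReverseCauchySchwarz (S : Matrix ι ι ℝ) : Prop :=
  ∀ x y : ι → ℝ, 0 < x ⬝ᵥ S *ᵥ x →
    (x ⬝ᵥ S *ᵥ x) * (y ⬝ᵥ S *ᵥ y) ≤ (x ⬝ᵥ S *ᵥ y) ^ 2

theorem reverseCauchySchwarz_of_dotProduct_eq_zero {S : Matrix ι ι ℝ} (hsymm : S.IsSymm)
    (v : ι → ℝ) (hv : ∀ z, z ⬝ᵥ v = 0 → z ⬝ᵥ S *ᵥ z ≤ 0) : S.ReverseCauchySchwarz := by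
  intro x y hx
  have hB : y ⬝ᵥ S *ᵥ x = x ⬝ᵥ S *ᵥ y := by
    rw [dotProduct_mulVec, dotProduct_comm, ← mulVec_transpose, hsymm.eq]
  set a := x ⬝ᵥ v
  set b := y ⬝ᵥ v
  have ha : a ≠ 0 := fun ha => not_lt.2 (hv x ha) hx
  -- `q x * q (a • y - b • x) = (b * q x - a * B x y) ^ 2 + a ^ 2 * (q x * q y - B x y ^ 2)`
  have hz := hv (a • y - b • x) (by simp [sub_dotProduct, a, b]; ring)
  simp only [mulVec_sub, mulVec_smul, dotProduct_sub, sub_dotProduct, dotProduct_smul,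
    smul_dotProduct, smul_eq_mul, hB] at hz
  nlinarith [sq_nonneg (b * (x ⬝ᵥ S *ᵥ x) - a * (x ⬝ᵥ S *ᵥ y)), mul_self_pos.2 ha]

theorem ReverseCauchySchwarz.dotProduct_mulVec_nonpos {S : Matrix ι ι ℝ}
    (hS : S.ReverseCauchySchwarz) {x y : ι → ℝ} (hx : 0 < x ⬝ᵥ S *ᵥ x)
    (hxy : x ⬝ᵥ S *ᵥ y = 0) : y ⬝ᵥ S *ᵥ y ≤ 0 := by
  have := hS x y hx
  rw [hxy, zero_pow two_ne_zero] at this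
  exact nonpos_of_mul_nonpos_right this hx

theorem dotProduct_mulVec_submatrix [DecidableEq ι] (S : Matrix ι ι ℝ) (f : κ → ι)
    (x y : κ → ℝ) :
    x ⬝ᵥ S.submatrix f f *ᵥ y =
      ((1 : Matrix ι ι ℝ).submatrix id f *ᵥ x) ⬝ᵥ
        S *ᵥ ((1 : Matrix ι ι ℝ).submatrix id f *ᵥ y) := by
  have hP : ((1 : Matrix ι ι ℝ).submatrix id f)ᵀ * S * (1 : Matrix ι ι ℝ).submatrix id f
      = S.submatrix f f := by
    rw [transpose_submatrix, transpose_one, ← Equiv.coe_refl, one_submatrix_mul,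
      mul_submatrix_one]
    simp
  rw [← hP, ← mulVec_mulVec, ← mulVec_mulVec, dotProduct_mulVec, vecMul_transpose]

theorem ReverseCauchySchwarz.submatrix {S : Matrix ι ι ℝ} (hS : S.ReverseCauchySchwarz)
    (f : κ → ι) : (S.submatrix f f).ReverseCauchySchwarz := by
  classical
  intro x y hx
  simp only [dotProduct_mulVec_submatrix] at hx ⊢
  exact hS _ _ hx

theorem ReverseCauchySchwarz.mul_mul_nonneg_fin_three {a b c : ℝ}
    (h : ReverseCauchySchwarz !![0, a, b; a, 0, c; b, c, 0]) : 0 ≤ a * b * c := by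
  rcases eq_or_ne a 0 with rfl | ha
  · simp
  have hxx : ![1, a, 0] ⬝ᵥ !![0, a, b; a, 0, c; b, c, 0] *ᵥ ![1, a, 0] = 2 * a ^ 2 := by
    simp [dotProduct, Fin.sum_univ_three]; ring
  have hxy : ![1, a, 0] ⬝ᵥ !![0, a, b; a, 0, c; b, c, 0] *ᵥ ![-c, -b, a] = 0 := by
    simp [dotProduct, Fin.sum_univ_three]; ring
  have hyy : ![-c, -b, a] ⬝ᵥ !![0, a, b; a, 0, c; b, c, 0] *ᵥ ![-c, -b, a] =
      -2 * (a * b * c) := by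
    simp [dotProduct, Fin.sum_univ_three]; ring
  have := h.dotProduct_mulVec_nonpos (by rw [hxx]; positivity) hxy
  linarith

theorem ReverseCauchySchwarz.mul_eq_mul_fin_four {a b c d : ℝ}
    (h : ReverseCauchySchwarz !![0, 0, a, b; 0, 0, c, d; a, c, 0, 0; b, d, 0, 0]) :
    a * d = b * c := by
  set D := a * d - b * c
  rcases eq_or_ne D 0 with hD | hD
  · exact sub_eq_zero.1 hD
  -- The witnesses are `(D e₁, adj B e₁)` and `(D e₂, adj B e₂)` for `B = !![a, b; c, d]`.
  have hxx : ![D, 0, d, -c] ⬝ᵥ !![0, 0, a, b; 0, 0, c, d; a, c, 0, 0; b, d, 0, 0] *ᵥ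
      ![D, 0, d, -c] = 2 * D ^ 2 := by
    simp [D, dotProduct, Fin.sum_univ_four]; ring
  have hxy : ![D, 0, d, -c] ⬝ᵥ !![0, 0, a, b; 0, 0, c, d; a, c, 0, 0; b, d, 0, 0] *ᵥ
      ![0, D, -b, a] = 0 := by
    simp [D, dotProduct, Fin.sum_univ_four]; ring
  have hyy : ![0, D, -b, a] ⬝ᵥ !![0, 0, a, b; 0, 0, c, d; a, c, 0, 0; b, d, 0, 0] *ᵥ
      ![0, D, -b, a] = 2 * D ^ 2 := by
    simp [D, dotProduct, Fin.sum_univ_four]; ring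
  have := h.dotProduct_mulVec_nonpos (by rw [hxx]; positivity) hxy
  rw [hyy] at this
  exact absurd this (not_le.2 (by positivity))

theorem ReverseCauchySchwarz.mul_eq_zero_fin_four {c d e f : ℝ}
    (h : ReverseCauchySchwarz !![0, 0, c, e; 0, 0, 0, d; c, 0, 0, f; e, d, f, 0]) :
    c * d = 0 := by
  rcases eq_or_ne c 0 with hc | hc
  · simp [hc]
  set g := e + f * c
  have hxx : ![1, 0, c, 0] ⬝ᵥ !![0, 0, c, e; 0, 0, 0, d; c, 0, 0, f; e, d, f, 0] *ᵥ
      ![1, 0, c, 0] = 2 * c ^ 2 := by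
    simp [dotProduct, Fin.sum_univ_four]; ring
  have hxy : ![1, 0, c, 0] ⬝ᵥ !![0, 0, c, e; 0, 0, 0, d; c, 0, 0, f; e, d, f, 0] *ᵥ
      ![0, f * g + c, -d * g, d * c] = 0 := by
    simp [g, dotProduct, Fin.sum_univ_four]; ring
  have hyy : ![0, f * g + c, -d * g, d * c] ⬝ᵥ
      !![0, 0, c, e; 0, 0, 0, d; c, 0, 0, f; e, d, f, 0] *ᵥ ![0, f * g + c, -d * g, d * c] =
      2 * (c * d) ^ 2 := by
    simp [dotProduct, Fin.sum_univ_four]; ring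
  have := h.dotProduct_mulVec_nonpos (by rw [hxx]; positivity) hxy
  rw [hyy] at this
  exact pow_eq_zero_iff two_ne_zero |>.1 (by linarith [sq_nonneg (c * d)])

section Hermitian

variable [DecidableEq ι]

theorem IsHermitian.dotProduct_mulVec_self_eq_sum_s12 {S : Matrix ι ι ℝ} (hS : S.IsHermitian)
    (x : ι → ℝ) :
    x ⬝ᵥ S *ᵥ x = ∑ m, hS.eigenvalues m * (x ⬝ᵥ ⇑(hS.eigenvectorBasis m)) ^ 2 := by
  have hcol : ∀ m, (x ᵥ* (hS.eigenvectorUnitary : Matrix ι ι ℝ)) m =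
      x ⬝ᵥ ⇑(hS.eigenvectorBasis m) := fun _ => rfl
  conv_lhs => rw [hS.spectral_theorem]
  rw [Unitary.conjStarAlgAut_apply, dotProduct_mulVec, ← vecMul_vecMul, ← vecMul_vecMul,
    star_eq_conjTranspose, conjTranspose_eq_transpose_of_trivial, vecMul_transpose,
    dotProduct_comm, dotProduct_mulVec, dotProduct]
  refine Finset.sum_congr rfl fun m _ => ?_
  simp only [vecMul_diagonal, Function.comp_apply, RCLike.ofReal_real_eq_id, id, hcol]
  ring

theorem IsHermitian.exists_forall_dotProduct_eq_zero_nonpos {S : Matrix ι ι ℝ}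
    (hS : S.IsHermitian) (hpos : Nat.card {i // 0 < hS.eigenvalues i} ≤ 1) :
    ∃ v : ι → ℝ, ∀ z, z ⬝ᵥ v = 0 → z ⬝ᵥ S *ᵥ z ≤ 0 := by
  have hunique : ∀ m k, 0 < hS.eigenvalues m → 0 < hS.eigenvalues k → m = k := fun m k hm hk =>
    congrArg Subtype.val ((Finite.card_le_one_iff_subsingleton.1 hpos).elim ⟨m, hm⟩ ⟨k, hk⟩)
  by_cases h : ∃ k, 0 < hS.eigenvalues k
  · obtain ⟨k, hk⟩ := h
    refine ⟨hS.eigenvectorBasis k, fun z hz => ?_⟩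
    rw [hS.dotProduct_mulVec_self_eq_sum_s12]
    refine Finset.sum_nonpos fun m _ => ?_
    rcases le_or_gt (hS.eigenvalues m) 0 with hm | hm
    · exact mul_nonpos_of_nonpos_of_nonneg hm (sq_nonneg _)
    · simp [hunique m k hm hk, hz]
  · push Not at h
    refine ⟨0, fun z _ => ?_⟩
    rw [hS.dotProduct_mulVec_self_eq_sum_s12]
    exact Finset.sum_nonpos fun m _ => mul_nonpos_of_nonpos_of_nonneg (h m) (sq_nonneg _)

theorem IsHermitian.reverseCauchySchwarz {S : Matrix ι ι ℝ} (hS : S.IsHermitian)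
    (hpos : Nat.card {i // 0 < hS.eigenvalues i} ≤ 1) : S.ReverseCauchySchwarz :=
  have ⟨v, hv⟩ := hS.exists_forall_dotProduct_eq_zero_nonpos hpos
  reverseCauchySchwarz_of_dotProduct_eq_zero (isHermitian_iff_isSymm.1 hS) v hv

end Hermitian

end Fintype

variable {ι : Type*}

theorem submatrix_fin_three {S : Matrix ι ι ℝ} (hsymm : S.IsSymm) (hdiag : ∀ i, S i i = 0)
    (i j k : ι) :
    S.submatrix ![i, j, k] ![i, j, k] = !![0, S i j, S i k; S i j, 0, S j k; S i k, S j k, 0] := by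
  ext a b
  fin_cases a <;> fin_cases b <;> simp [hdiag, hsymm.apply]

theorem submatrix_fin_four {S : Matrix ι ι ℝ} (hsymm : S.IsSymm) (hdiag : ∀ i, S i i = 0)
    (i j k l : ι) :
    S.submatrix ![i, j, k, l] ![i, j, k, l] =
      !![0, S i j, S i k, S i l; S i j, 0, S j k, S j l;
        S i k, S j k, 0, S k l; S i l, S j l, S k l, 0] := by
  ext a b
  fin_cases a <;> fin_cases b <;> simp [hdiag, hsymm.apply]

end Matrix

namespace Matrix.ReverseCauchySchwarz

variable {ι : Type*} [Fintype ι] {S : Matrix ι ι ℝ}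

theorem mul_mul_nonneg (hS : S.ReverseCauchySchwarz) (hsymm : S.IsSymm)
    (hdiag : ∀ i, S i i = 0) (i j k : ι) : 0 ≤ S i j * S j k * S k i := by
  have h := hS.submatrix ![i, j, k]
  rw [submatrix_fin_three hsymm hdiag] at h
  rw [hsymm.apply i k]
  linarith [h.mul_mul_nonneg_fin_three]

theorem mul_eq_mul_of_apply_eq_zero (hS : S.ReverseCauchySchwarz) (hsymm : S.IsSymm)
    (hdiag : ∀ i, S i i = 0) {i j k l : ι} (hij : S i j = 0) (hkl : S k l = 0) :
    S i k * S j l = S i l * S j k := by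
  have h := hS.submatrix ![i, j, k, l]
  rw [submatrix_fin_four hsymm hdiag, hij, hkl] at h
  exact h.mul_eq_mul_fin_four

theorem mul_eq_zero_of_apply_eq_zero (hS : S.ReverseCauchySchwarz) (hsymm : S.IsSymm)
    (hdiag : ∀ i, S i i = 0) {i j k : ι} (hij : S i j = 0) (hjk : S j k = 0) (l : ι) :
    S i k * S j l = 0 := by
  have h := hS.submatrix ![i, j, k, l]
  rw [submatrix_fin_four hsymm hdiag, hij, hjk] at h
  exact h.mul_eq_zero_fin_four

theorem mul_mul_mul_nonneg (hS : S.ReverseCauchySchwarz) (hsymm : S.IsSymm)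
    (hdiag : ∀ i, S i i = 0) (i j k l : ι) : 0 ≤ S i j * S j k * S k l * S l i := by
  have triangle := hS.mul_mul_nonneg hsymm hdiag
  by_cases hik : S i k = 0
  · by_cases hjl : S j l = 0
    · have := hS.mul_eq_mul_of_apply_eq_zero hsymm hdiag hik hjl
      rw [hsymm.apply j k] at this
      calc 0 ≤ (S i l * S j k) ^ 2 := sq_nonneg _
        _ = S i j * S j k * S k l * S l i := by
          rw [hsymm.apply i l]; linear_combination -(S i l * S j k) * this
    · refine nonneg_of_mul_nonneg_right ?_ (sq_pos_of_ne_zero hjl)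
      calc 0 ≤ (S i j * S j l * S l i) * (S j k * S k l * S l j) :=
            mul_nonneg (triangle i j l) (triangle j k l)
        _ = S j l ^ 2 * (S i j * S j k * S k l * S l i) := by rw [hsymm.apply j l]; ring
  · refine nonneg_of_mul_nonneg_right ?_ (sq_pos_of_ne_zero hik)
    calc 0 ≤ (S i j * S j k * S k i) * (S i k * S k l * S l i) :=
          mul_nonneg (triangle i j k) (triangle i k l)
      _ = S i k ^ 2 * (S i j * S j k * S k l * S l i) := by rw [hsymm.apply i k]; ring

theorem equivalence_eq_or_apply_eq_zero (hS : S.ReverseCauchySchwarz) (hsymm : S.IsSymm)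
    (hdiag : ∀ i, S i i = 0) :
    Equivalence (fun i j : {i : ι // S i ≠ 0} => (i : ι) = j ∨ S i j = 0) where
  refl _ := .inl rfl
  symm := fun
    | .inl h => .inl h.symm
    | .inr h => .inr (hsymm.apply _ _ ▸ h)
  trans := by
    rintro i j k (hij | hij) (hjk | hjk)
    · exact .inl (hij.trans hjk)
    · exact hij ▸ .inr hjk
    · exact hjk ▸ .inr hij
    · obtain ⟨l, hl⟩ := Function.ne_iff.1 j.2
      have := hS.mul_eq_zero_of_apply_eq_zero hsymm hdiag hij hjk l
      exact .inr <| (mul_eq_zero.1 this).resolve_right hl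

theorem add_mul_ne_zero (hS : S.ReverseCauchySchwarz) (hsymm : S.IsSymm)
    (hdiag : ∀ i, S i i = 0) {i j u v : ι} (hij : S i j ≠ 0) (huv : S u v ≠ 0) :
    S u i + S i j * S u j ≠ 0 := by
  have hsame : 0 ≤ S u i * (S i j * S u j) := by
    have := hS.mul_mul_nonneg hsymm hdiag u i j
    rw [hsymm.apply u j] at this
    linarith
  have hsq : 0 < S u i ^ 2 + (S i j * S u j) ^ 2 := by
    by_cases hui : S u i = 0
    · have huj : S u j ≠ 0 := fun huj => mul_ne_zero hij huv <|
        hS.mul_eq_zero_of_apply_eq_zero hsymm hdiag (hsymm.apply u i ▸ hui) huj v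
      exact add_pos_of_nonneg_of_pos (sq_nonneg _) (sq_pos_of_ne_zero (mul_ne_zero hij huj))
    · exact add_pos_of_pos_of_nonneg (sq_pos_of_ne_zero hui) (sq_nonneg _)
  intro h
  nlinarith [mul_self_eq_zero.2 h]

theorem exists_forall_mul_mul_pos (hS : S.ReverseCauchySchwarz) (hsymm : S.IsSymm)
    (hdiag : ∀ i, S i i = 0) :
    ∃ w : ι → ℝ, ∀ u v, S u v ≠ 0 → 0 < S u v * w u * w v := by
  by_cases h : ∃ i j, S i j ≠ 0
  swap
  · push Not at h
    exact ⟨0, fun u v huv => absurd (h u v) huv⟩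
  obtain ⟨i, j, hij⟩ := h
  refine ⟨fun u => S u i + S i j * S u j, fun u v huv => ?_⟩
  have triangle := hS.mul_mul_nonneg hsymm hdiag
  have cycle := hS.mul_mul_mul_nonneg hsymm hdiag
  have hnonneg : 0 ≤ S u v * (S u i + S i j * S u j) * (S v i + S i j * S v j) := by
    have := add_nonneg (add_nonneg (triangle u v i) (cycle u v j i))
      (add_nonneg (cycle u v i j) (mul_nonneg (sq_nonneg (S i j)) (triangle u v j)))
    rw [hsymm.apply u i, hsymm.apply u j, hsymm.apply i j] at this
    linarith
  exact hnonneg.lt_of_ne' <| mul_ne_zero (mul_ne_zero huv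
    (hS.add_mul_ne_zero hsymm hdiag hij huv))
    (hS.add_mul_ne_zero hsymm hdiag hij ((hsymm.apply u v).symm ▸ huv))

end Matrix.ReverseCauchySchwarz

theorem pos_mul_ite_mul_ite {c a b : ℝ} (h : 0 < c * a * b) :
    0 < c * (if 0 ≤ a then 1 else -1) * (if 0 ≤ b then 1 else -1) := by
  have habs : c * a * b =
      c * (if 0 ≤ a then 1 else -1) * (if 0 ≤ b then 1 else -1) * (|a| * |b|) := by
    split_ifs with ha hb hb <;> simp [abs_of_nonneg, abs_of_neg, *, not_le.1] <;> ring
  rw [habs] at h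
  exact pos_of_mul_pos_left h (by positivity)

/-- Let `S` be a real symmetric `n × n` matrix with zero diagonal and at most one positive
eigenvalue, and let `N` be the set of indices whose row in `S` is nonzero. Then:
(a) the relation `i ~ j ↔ (i = j ∨ s_ij = 0)` is an equivalence relation on `N`; and
(b) there is a sign vector `σ : {1,…,n} → {−1,+1}` with `s_ij·σ_i·σ_j > 0` whenever
`s_ij ≠ 0`. -/
theorem parallel_equivalence_and_signs (n : ℕ) (S : Matrix (Fin n) (Fin n) ℝ)
    (hS : S.IsHermitian) (hdiag : ∀ i, S i i = 0)
    (hpos : Nat.card {i : Fin n // 0 < hS.eigenvalues i} ≤ 1) :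
    Equivalence (fun (i j : {i : Fin n // S i ≠ 0}) =>
        (i : Fin n) = (j : Fin n) ∨ S (i : Fin n) (j : Fin n) = 0) ∧
    ∃ σ : Fin n → ℝ, (∀ i, σ i = 1 ∨ σ i = -1) ∧
      ∀ i j : Fin n, S i j ≠ 0 → 0 < S i j * σ i * σ j := by
  have hsymm : S.IsSymm := isHermitian_iff_isSymm.1 hS
  have hRCS := hS.reverseCauchySchwarz hpos
  obtain ⟨w, hw⟩ := hRCS.exists_forall_mul_mul_pos hsymm hdiag
  refine ⟨hRCS.equivalence_eq_or_apply_eq_zero hsymm hdiag, fun i => if 0 ≤ w i then 1 else -1,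
    fun i => ?_, fun i j hij => pos_mul_ite_mul_ite (hw i j hij)⟩
  dsimp only
  split_ifs <;> simp
end

section
/- For all real numbers p12, p13, p14, p23, p24, p34, the determinant of the symmetric 4×4 matrix with zero diagonal whose off-diagonal entries are s_ij = p_ij² (for 1 ≤ i < j ≤ 4) equals the product (p12·p34 + p13·p24 + p14·p23)·(−p12·p34 − p13·p24 + p14·p23)·(−p12·p34 + p13·p24 − p14·p23)·(p12·p34 − p13·p24 − p14·p23). -/
/-!
For a symmetric zero-diagonal `4 × 4` matrix, let `X`, `Y`, `Z` be the three products of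
complementary entries `a₁₂a₃₄`, `a₁₃a₂₄`, `a₁₄a₂₃`; Laplace expansion shows that its determinant
is `X² + Y² + Z² - 2(XY + YZ + ZX)`. When `X = x²`, `Y = y²`, `Z = z²` this form splits into the
four linear factors `±x ± y ± z`, exactly as in Heron's formula.
-/

open Matrix

theorem det_symm_zero_diag_fin_four {R : Type*} [CommRing R] (a b c d e f : R) :
    (!![0, a, b, c;
        a, 0, d, e;
        b, d, 0, f;
        c, e, f, 0] : Matrix (Fin 4) (Fin 4) R).det =
      (a * f) ^ 2 + (b * e) ^ 2 + (c * d) ^ 2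
        - 2 * (a * f * (b * e) + b * e * (c * d) + c * d * (a * f)) := by
  rw [det_succ_row_zero]
  simp [Fin.sum_univ_succ, det_fin_three, Fin.succAbove]
  ring

theorem sq_add_sq_add_sq_sub_two_mul_factor {R : Type*} [CommRing R] (x y z : R) :
    (x ^ 2) ^ 2 + (y ^ 2) ^ 2 + (z ^ 2) ^ 2
        - 2 * (x ^ 2 * y ^ 2 + y ^ 2 * z ^ 2 + z ^ 2 * x ^ 2) =
      (x + y + z) * (-x - y + z) * (-x + y - z) * (x - y - z) := by
  ring

/-- Factorization of the determinant of a symmetric `4 × 4` matrix with zero diagonal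
whose off-diagonal entries are the squares `p_ij²` (the squared Plücker quadric /
Schouten identity). -/
theorem det_factorization (p12 p13 p14 p23 p24 p34 : ℝ) :
    (!![0, p12 ^ 2, p13 ^ 2, p14 ^ 2;
        p12 ^ 2, 0, p23 ^ 2, p24 ^ 2;
        p13 ^ 2, p23 ^ 2, 0, p34 ^ 2;
        p14 ^ 2, p24 ^ 2, p34 ^ 2, 0] : Matrix (Fin 4) (Fin 4) ℝ).det =
      (p12 * p34 + p13 * p24 + p14 * p23) *
      (-(p12 * p34) - p13 * p24 + p14 * p23) *
      (-(p12 * p34) + p13 * p24 - p14 * p23) *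
      (p12 * p34 - p13 * p24 - p14 * p23) := by
  rw [det_symm_zero_diag_fin_four, ← mul_pow, ← mul_pow, ← mul_pow]
  exact sq_add_sq_add_sq_sub_two_mul_factor _ _ _
end

section
/- Let S be a real symmetric 4×4 matrix with all diagonal entries equal to zero and all off-diagonal entries strictly positive. Then S has exactly one positive eigenvalue and three negative eigenvalues (counted with algebraic multiplicity) if and only if det(S) < 0. -/
/-!
The eigenvalues of `S` sum to `tr S = 0` and multiply to `det S`, so `det S < 0` means they are
all nonzero with an odd number of negative ones: one or three.
One negative eigenvalue `λ` is impossible: the three positive ones would sum to `-λ = |λ|`, so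
each would be smaller than `|λ|`, while for a nonnegative symmetric matrix the largest eigenvalue
dominates `|λ|`: if `S v = λ v` then `|λ| ‖v‖² ≤ |v| ⬝ S |v|`, and the Rayleigh quotient is at
most the top eigenvalue.
-/

open Matrix Finset

section SignCount

variable {ι R : Type*} [Fintype ι] {f : ι → R}

theorem prod_neg_iff_odd_card_neg [CommRing R] [LinearOrder R] [IsStrictOrderedRing R]
    (hf : ∀ i, f i ≠ 0) : ∏ i, f i < 0 ↔ Odd #{i | f i < 0} := by
  have hpos : 0 < (∏ i ∈ {i | f i < 0}, -f i) * ∏ i ∈ {i | ¬f i < 0}, f i :=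
    mul_pos (prod_pos fun i hi => neg_pos.2 (mem_filter.1 hi).2)
      (prod_pos fun i hi => (not_lt.1 (mem_filter.1 hi).2).lt_of_ne' (hf i))
  have hsplit : ∏ i, f i = (-1) ^ #{i | f i < 0} *
      ((∏ i ∈ {i | f i < 0}, -f i) * ∏ i ∈ {i | ¬f i < 0}, f i) := by
    rw [← mul_assoc, ← prod_neg, ← prod_filter_mul_prod_filter_not univ (fun i => f i < 0)]
    simp only [neg_neg]
  rw [hsplit]
  rcases Nat.even_or_odd #{i | f i < 0} with h | h
  · rw [h.neg_one_pow, one_mul]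
    exact iff_of_false hpos.not_gt (Nat.not_odd_iff_even.2 h)
  · rw [h.neg_one_pow, neg_one_mul]
    exact iff_of_true (neg_neg_of_pos hpos) h

theorem card_pos_add_card_neg_eq_card_iff [DecidableEq ι] [Zero R] [LinearOrder R] :
    #{i | 0 < f i} + #{i | f i < 0} = Fintype.card ι ↔ ∀ i, f i ≠ 0 := by
  rw [← card_union_of_disjoint (disjoint_filter.2 fun i _ h => (lt_asymm h).elim), ← filter_or,
    ← card_univ, card_filter_eq_iff]
  simp [← lt_or_lt_iff_ne, or_comm]

end SignCount

namespace Matrix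

variable {n : Type*} [Fintype n]

theorem abs_mulVec_le_mulVec_abs {A : Matrix n n ℝ} (hA : ∀ i j, 0 ≤ A i j) (x : n → ℝ) :
    |A *ᵥ x| ≤ A *ᵥ |x| := fun i => by
  simp only [Pi.abs_apply, mulVec, dotProduct]
  exact (abs_sum_le_sum_abs _ _).trans_eq
    (sum_congr rfl fun j _ => by rw [abs_mul, abs_of_nonneg (hA i j)])

variable [DecidableEq n] {A : Matrix n n ℝ}

theorem IsHermitian.dotProduct_mulVec_le_of_eigenvalues_le (hA : A.IsHermitian) {c : ℝ}
    (hc : ∀ i, hA.eigenvalues i ≤ c) (x : n → ℝ) : x ⬝ᵥ (A *ᵥ x) ≤ c * (x ⬝ᵥ x) := by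
  have hpsd : (c • (1 : Matrix n n ℝ) - A).PosSemidef := by
    conv => enter [1, 2]; rw [hA.spectral_theorem]
    rw [← map_one (Unitary.conjStarAlgAut ℝ _ hA.eigenvectorUnitary), ← map_smul, ← map_sub,
      Unitary.conjStarAlgAut_apply, Unitary.isUnit_coe.posSemidef_star_right_conjugate_iff,
      smul_one_eq_diagonal, diagonal_sub, posSemidef_diagonal_iff]
    intro i
    simpa using hc i
  have := hpsd.dotProduct_mulVec_nonneg x
  simp only [star_trivial, sub_mulVec, smul_mulVec, one_mulVec, dotProduct_sub, dotProduct_smul,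
    smul_eq_mul] at this
  linarith

theorem IsHermitian.exists_abs_eigenvalue_le_eigenvalue (hA : A.IsHermitian)
    (hA₀ : ∀ i j, 0 ≤ A i j) (k : n) : ∃ i, |hA.eigenvalues k| ≤ hA.eigenvalues i := by
  have : Nonempty n := ⟨k⟩
  obtain ⟨i, hi⟩ := Finite.exists_max hA.eigenvalues
  refine ⟨i, ?_⟩
  set v : n → ℝ := ⇑(hA.eigenvectorBasis k)
  have hv : |v| ⬝ᵥ |v| = 1 := by
    have := EuclideanSpace.inner_eq_star_dotProduct (hA.eigenvectorBasis k) (hA.eigenvectorBasis k)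
    rw [real_inner_self_eq_norm_sq, hA.eigenvectorBasis.orthonormal.1 k] at this
    simp only [dotProduct, Pi.abs_apply, abs_mul_abs_self]
    simpa [dotProduct] using this.symm
  calc |hA.eigenvalues k| = |v| ⬝ᵥ |hA.eigenvalues k • v| := by
        rw [show |hA.eigenvalues k • v| = |hA.eigenvalues k| • |v| from funext fun j => abs_mul _ _,
          dotProduct_smul, hv, smul_eq_mul, mul_one]
    _ = |v| ⬝ᵥ |A *ᵥ v| := by rw [hA.mulVec_eigenvectorBasis]
    _ ≤ |v| ⬝ᵥ (A *ᵥ |v|) :=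
        dotProduct_le_dotProduct_of_nonneg_left (abs_mulVec_le_mulVec_abs hA₀ v) (abs_nonneg v)
    _ ≤ hA.eigenvalues i * (|v| ⬝ᵥ |v|) := hA.dotProduct_mulVec_le_of_eigenvalues_le hi |v|
    _ = hA.eigenvalues i := by rw [hv, mul_one]

end Matrix

theorem card_pos_eq_one_and_card_neg_eq_three_iff_prod_neg {μ : Fin 4 → ℝ}
    (hsum : ∑ i, μ i = 0) (hdom : ∀ k, ∃ i, |μ k| ≤ μ i) :
    (#{i | 0 < μ i} = 1 ∧ #{i | μ i < 0} = 3) ↔ ∏ i, μ i < 0 := by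
  constructor
  · rintro ⟨hp, hn⟩
    have hne : ∀ i, μ i ≠ 0 := card_pos_add_card_neg_eq_card_iff.1 (by simp [hp, hn])
    exact (prod_neg_iff_odd_card_neg hne).2 (by rw [hn]; decide)
  · intro hprod
    have hne : ∀ i, μ i ≠ 0 := fun i hi => hprod.ne (prod_eq_zero (mem_univ i) hi)
    have hcard := card_pos_add_card_neg_eq_card_iff.2 hne
    have hodd := (prod_neg_iff_odd_card_neg hne).1 hprod
    suffices #{i | μ i < 0} ≠ 1 by
      simp only [Fintype.card_fin] at hcard
      obtain ⟨m, hm⟩ := hodd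
      omega
    intro hn1
    obtain ⟨k, hk⟩ := card_eq_one.1 hn1
    have hneg : ∀ j, μ j < 0 ↔ j = k := fun j => by simpa using congrArg (j ∈ ·) hk
    have hpos : ∀ j ≠ k, 0 < μ j := fun j hj =>
      (not_lt.1 (mt (hneg j).1 hj)).lt_of_ne' (hne j)
    obtain ⟨i, hi⟩ := hdom k
    have hik : i ≠ k := fun h => by
      subst h; linarith [abs_nonneg (μ i), (hneg i).2 rfl]
    have hrest : 0 < ∑ j ∈ (univ.erase k).erase i, μ j := by
      refine sum_pos (fun j hj => hpos j (mem_erase.1 (mem_of_mem_erase hj)).1) ?_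
      rw [← card_pos, card_erase_of_mem (mem_erase.2 ⟨hik, mem_univ i⟩),
        card_erase_of_mem (mem_univ k)]
      simp
    rw [← add_sum_erase _ _ (mem_univ k), ← add_sum_erase _ _ (mem_erase.2 ⟨hik, mem_univ i⟩)]
      at hsum
    rw [abs_of_neg ((hneg k).2 rfl)] at hi
    linarith

/-- Let `S` be a real symmetric `4 × 4` matrix with zero diagonal and strictly positive
off-diagonal entries. Then `S` has exactly one positive and three negative eigenvalues
(with algebraic multiplicity) if and only if `det S < 0`. -/
theorem signature_iff_det_neg (S : Matrix (Fin 4) (Fin 4) ℝ) (hS : S.IsHermitian)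
    (hdiag : ∀ i, S i i = 0) (hoff : ∀ i j : Fin 4, i ≠ j → 0 < S i j) :
    (Nat.card {i : Fin 4 // 0 < hS.eigenvalues i} = 1 ∧
     Nat.card {i : Fin 4 // hS.eigenvalues i < 0} = 3) ↔ S.det < 0 := by
  have htrace : ∑ i, hS.eigenvalues i = 0 := by
    simpa [trace, hdiag] using hS.trace_eq_sum_eigenvalues.symm
  have hS₀ : ∀ i j, 0 ≤ S i j := fun i j =>
    (eq_or_ne i j).elim (fun h => h ▸ (hdiag i).ge) (fun h => (hoff i j h).le)
  simp only [Nat.card_eq_fintype_card, Fintype.card_subtype, hS.det_eq_prod_eigenvalues,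
    RCLike.ofReal_real_eq_id, id]
  exact card_pos_eq_one_and_card_neg_eq_three_iff_prod_neg htrace
    (hS.exists_abs_eigenvalue_le_eigenvalue hS₀)
end

section
/- For real numbers x and y, let S(x,y) be the real symmetric 4×4 matrix with zero diagonal and entries s12 = s34 = x, s14 = s23 = y, and s13 = s24 = −x−y (that is, the matrix with rows (0, x, −x−y, y), (x, 0, y, −x−y), (−x−y, y, 0, x), (y, −x−y, x, 0)). Then: (a) every 3×3 principal minor of S(x,y) equals −2xy(x+y); (b) all row sums of S(x,y) are zero; and (c) S(x,y) has at most one positive eigenvalue if and only if xy(x+y) ≤ 0. -/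
/-!
The columns of the 4 × 4 Hadamard matrix (the characters of the Klein four-group, which acts
on the indices by symmetries of `S(x,y)`) are eigenvectors of `S(x,y)`, with eigenvalues
`0, 2x, -2(x+y), 2y`. The three nonzero eigenvalues sum to zero, and three reals with zero sum
have at most one positive member exactly when their product `-8xy(x+y)` is nonnegative.
-/

open Matrix

/-- The matrix `S(x,y)` parametrizing the MMC region for `n = 4` massless particles. -/
def mmcMatrix (x y : ℝ) : Matrix (Fin 4) (Fin 4) ℝ :=
  !![0, x, -x - y, y;
     x, 0, y, -x - y;
     -x - y, y, 0, x;
     y, -x - y, x, 0]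

open Polynomial

lemma Finset.exists_eq_compl_singleton {α : Type*} [Fintype α] [DecidableEq α] {I : Finset α}
    (h : I.card + 1 = Fintype.card α) : ∃ k, I = {k}ᶜ := by
  obtain ⟨k, hk⟩ := Finset.card_eq_one.mp (show Iᶜ.card = 1 by rw [card_compl]; omega)
  exact ⟨k, by rw [← hk, compl_compl]⟩

lemma Matrix.det_submatrix_compl_singleton {n : ℕ} {R : Type*} [CommRing R]
    (A : Matrix (Fin (n + 1)) (Fin (n + 1)) R) (k : Fin (n + 1)) :
    (A.submatrix (fun i : ({k}ᶜ : Finset _) => (i : Fin (n + 1)))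
        (fun i : ({k}ᶜ : Finset _) => (i : Fin (n + 1)))).det =
      (A.submatrix k.succAbove k.succAbove).det := by
  let e : Fin n ≃ ({k}ᶜ : Finset (Fin (n + 1))) :=
    (finSuccAboveEquiv k).trans (Equiv.subtypeEquivRight (by simp))
  rw [← det_submatrix_equiv_self e, submatrix_submatrix]
  rfl

lemma Matrix.charpoly_mul_mul_eq_of_mul_eq_one {n R : Type*} [Fintype n] [DecidableEq n]
    [CommRing R] {P Q : Matrix n n R} (B : Matrix n n R) (hQP : Q * P = 1) :
    (P * B * Q).charpoly = B.charpoly := by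
  rw [mul_assoc, charpoly_mul_comm, mul_assoc, hQP, mul_one]

lemma Matrix.IsHermitian.map_eigenvalues_eq_of_charpoly_eq {n : Type*} [Fintype n]
    [DecidableEq n] {A : Matrix n n ℝ} (hA : A.IsHermitian) {d : n → ℝ}
    (h : A.charpoly = (diagonal d).charpoly) :
    Finset.univ.val.map hA.eigenvalues = Finset.univ.val.map d := by
  have hroots := hA.roots_charpoly_eq_eigenvalues
  rw [h, charpoly_diagonal,
    roots_prod _ _ (by simp [Finset.prod_ne_zero_iff, X_sub_C_ne_zero])] at hroots
  simpa using hroots.symm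

lemma Nat.card_subtype_eq_countP_map {ι α : Type*} [Fintype ι] (f : ι → α) (p : α → Prop)
    [DecidablePred p] : Nat.card {i // p (f i)} = (Finset.univ.val.map f).countP p := by
  rw [Nat.card_eq_fintype_card, Fintype.card_subtype, Multiset.countP_map]
  rfl

lemma Multiset.countP_pos_le_one_iff_of_add_add_eq_zero {R : Type*} [Field R] [LinearOrder R]
    [IsStrictOrderedRing R] {a b c : R} (h : a + b + c = 0) :
    ({a, b, c} : Multiset R).countP (0 < ·) ≤ 1 ↔ 0 ≤ a * b * c := by
  simp only [Multiset.insert_eq_cons, ← Multiset.cons_zero, Multiset.countP_cons,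
    Multiset.countP_zero]
  rcases lt_or_ge 0 a with ha | ha <;> rcases lt_or_ge 0 b with hb | hb <;>
    rcases lt_or_ge 0 c with hc | hc <;> simp [ha, hb, hc, not_lt.2] <;> try linarith
  · nlinarith [mul_nonneg_of_nonpos_of_nonpos hb hc]
  · nlinarith [mul_nonneg_of_nonpos_of_nonpos ha hc]
  · exact mul_nonneg_of_nonpos_of_nonpos ha hb
  · obtain rfl : a = 0 := by linarith
    simp

def hadamard4 : Matrix (Fin 4) (Fin 4) ℝ :=
  !![1, 1, 1, 1;
     1, 1, -1, -1;
     1, -1, 1, -1;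
     1, -1, -1, 1]

lemma inv_four_smul_hadamard4_mul_hadamard4 : (4 : ℝ)⁻¹ • hadamard4 * hadamard4 = 1 := by
  ext i j
  fin_cases i <;> fin_cases j <;> simp [hadamard4, mul_apply, Fin.sum_univ_four] <;> norm_num

lemma mmcMatrix_eq_hadamard4_conj (x y : ℝ) :
    mmcMatrix x y =
      hadamard4 * diagonal ![0, 2 * x, -2 * (x + y), 2 * y] * ((4 : ℝ)⁻¹ • hadamard4) := by
  ext i j
  rw [mul_apply]
  simp only [mul_diagonal, Matrix.smul_apply, Fin.sum_univ_four]
  fin_cases i <;> fin_cases j <;> simp [mmcMatrix, hadamard4] <;> ring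

lemma mmcMatrix_map_eigenvalues (x y : ℝ) (hS : (mmcMatrix x y).IsHermitian) :
    Finset.univ.val.map hS.eigenvalues = {0, 2 * x, -2 * (x + y), 2 * y} :=
  calc _ = Finset.univ.val.map ![0, 2 * x, -2 * (x + y), 2 * y] :=
        hS.map_eigenvalues_eq_of_charpoly_eq <| by
          rw [mmcMatrix_eq_hadamard4_conj,
            charpoly_mul_mul_eq_of_mul_eq_one _ inv_four_smul_hadamard4_mul_hadamard4]
    _ = _ := rfl

lemma mmcMatrix_det_submatrix_succAbove (x y : ℝ) (k : Fin 4) :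
    ((mmcMatrix x y).submatrix k.succAbove k.succAbove).det = -2 * x * y * (x + y) := by
  fin_cases k <;> simp [det_fin_three, mmcMatrix, Fin.succAbove] <;> ring

/-- For the matrix `S(x,y)`: (a) every `3 × 3` principal minor equals `-2xy(x+y)`;
(b) all row sums vanish; (c) `S(x,y)` has at most one positive eigenvalue if and only if
`xy(x+y) ≤ 0`. -/
theorem mmcMatrix_properties (x y : ℝ) (hS : (mmcMatrix x y).IsHermitian) :
    (∀ I : Finset (Fin 4), I.card = 3 →
      ((mmcMatrix x y).submatrix (fun i : I => (i : Fin 4)) (fun j : I => (j : Fin 4))).det =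
        -2 * x * y * (x + y)) ∧
    (∀ i, ∑ j, mmcMatrix x y i j = 0) ∧
    (Nat.card {i : Fin 4 // 0 < hS.eigenvalues i} ≤ 1 ↔ x * y * (x + y) ≤ 0) := by
  refine ⟨fun I hI => ?_, fun i => ?_, ?_⟩
  · obtain ⟨k, rfl⟩ := Finset.exists_eq_compl_singleton (I := I) (by simp [hI])
    rw [det_submatrix_compl_singleton, mmcMatrix_det_submatrix_succAbove]
  · fin_cases i <;> simp [mmcMatrix, Fin.sum_univ_four]; ring
  · rw [Nat.card_subtype_eq_countP_map, mmcMatrix_map_eigenvalues, Multiset.insert_eq_cons,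
      Multiset.countP_cons_of_neg _ (lt_irrefl 0),
      Multiset.countP_pos_le_one_iff_of_add_add_eq_zero (by ring),
      show 2 * x * (-2 * (x + y)) * (2 * y) = -8 * (x * y * (x + y)) by ring]
    constructor <;> intro <;> linarith
end
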